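/- arXiv:2008.03688 — 8 statements merged into one kernel-verified Lean document; each statement's English description precedes it below -/
import Mathlib

section
/- Let k be a perfect field with algebraic closure k̄, let L/k be a finite extension inside k̄, and let p₁,…,p₄, q₁,…,q₄ ∈ ℙ²(L) be such that: the p_i are pairwise distinct, the q_i are pairwise distinct, no three of the p_i are collinear, no three of the q_i are collinear, the sets {p₁,…,p₄} and {q₁,…,q₄} are stable under the coordinatewise Gal(k̄/k)-action, and for every g ∈ Gal(k̄/k) there exists a permutation σ ∈ S₄ with p_i^g = p_{σ(i)} and q_i^g = q_{σ(i)} for i = 1,…,4. Then there exists α ∈ PGL₃(k) such that α(p_i) = q_i for i = 1,…,4. -/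
open scoped LinearAlgebra.Projectivization

namespace CremonaPaper

variable {k K : Type} [Field k] [Field K] [Algebra k K]

/-- The coordinatewise action of the Galois group `Gal(K/k)` on the projective space
`ℙ^{n-1}(K)`: an automorphism is applied to the homogeneous coordinates. -/
noncomputable def galAct {n : ℕ} (g : K ≃ₐ[k] K) (P : ℙ K (Fin n → K)) :
    ℙ K (Fin n → K) :=
  Projectivization.mk K (fun i => g (P.rep i)) (by
    intro h
    apply P.rep_nonzero
    funext i
    have hi : g (P.rep i) = 0 := congrFun h i
    show P.rep i = 0
    exact g.injective (by rw [map_zero]; exact hi))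

/-- The action of an invertible matrix on projective space. -/
noncomputable def mulAct {F : Type} [Field F] {n : ℕ} (A : Matrix (Fin n) (Fin n) F)
    (hA : IsUnit A) (P : ℙ F (Fin n → F)) : ℙ F (Fin n → F) :=
  Projectivization.mk F (A.mulVec P.rep) (by
    intro h
    apply P.rep_nonzero
    have h1 : ((hA.unit⁻¹ : (Matrix (Fin n) (Fin n) F)ˣ) : Matrix (Fin n) (Fin n) F).mulVec
        (A.mulVec P.rep) = 0 := by rw [h, Matrix.mulVec_zero]
    rw [Matrix.mulVec_mulVec] at h1
    have h2 := hA.unit.inv_mul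
    rw [hA.unit_spec] at h2
    rw [h2, Matrix.one_mulVec] at h1
    exact h1)

/-- The action of `GL_n(k)` on `ℙ^{n-1}(K)`, via the inclusion `GL_n(k) ⊆ GL_n(K)` given by
the algebra map.  This action factors through `PGL_n(k)`, so that existence statements about
`PGL_n(k)` translate to existence statements about `GL_n(k)`. -/
noncomputable def glAct {n : ℕ} (M : GL (Fin n) k) (P : ℙ K (Fin n → K)) :
    ℙ K (Fin n → K) :=
  mulAct ((M : Matrix (Fin n) (Fin n) k).map (algebraMap k K))
    (by
      have h : IsUnit ((algebraMap k K).mapMatrix (M : Matrix (Fin n) (Fin n) k)) :=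
        (Units.isUnit M).map (algebraMap k K).mapMatrix
      simpa [RingHom.mapMatrix_apply] using h) P

/-- The action of `GL_n(F)` on `ℙ^{n-1}(F)`. -/
noncomputable def glActSelf {F : Type} [Field F] {n : ℕ} (M : GL (Fin n) F)
    (P : ℙ F (Fin n → F)) : ℙ F (Fin n → F) :=
  mulAct (M : Matrix (Fin n) (Fin n) F) (Units.isUnit M) P

/-- A point of `ℙ^{n-1}(K)` is defined over the intermediate field `F` if it admits a
representative with all homogeneous coordinates in `F`. -/
def DefinedOver {n : ℕ} (F : IntermediateField k K) (P : ℙ K (Fin n → K)) : Prop :=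
  ∃ v : Fin n → K, (∀ i, v i ∈ F) ∧ ∃ hv : v ≠ 0, P = Projectivization.mk K v hv

open Matrix

lemma exists_matrix (u t : Fin 4 → (Fin 3 → K))
    (hu : LinearIndependent K ![u 0, u 1, u 2]) (ht : LinearIndependent K ![t 0, t 1, t 2])
    (hu3 : u 3 = u 0 + u 1 + u 2) (ht3 : t 3 = t 0 + t 1 + t 2) :
    ∃ M : Matrix (Fin 3) (Fin 3) K, IsUnit M ∧ (∀ i, M *ᵥ u i = t i) ∧
      ∀ B : Matrix (Fin 3) (Fin 3) K,
        (∀ i, ∃ c : Kˣ, B *ᵥ u i = (c : K) • t i) → ∃ c : Kˣ, B = (c : K) • M := by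
  classical
  set U : Matrix (Fin 3) (Fin 3) K := (Matrix.of ![u 0, u 1, u 2])ᵀ with hUdef
  set T : Matrix (Fin 3) (Fin 3) K := (Matrix.of ![t 0, t 1, t 2])ᵀ with hTdef
  have hUu : IsUnit U := by
    rw [hUdef, Matrix.isUnit_transpose]
    exact Matrix.linearIndependent_rows_iff_isUnit.mp hu
  have hTu : IsUnit T := by
    rw [hTdef, Matrix.isUnit_transpose]
    exact Matrix.linearIndependent_rows_iff_isUnit.mp ht
  have hUcol : ∀ j : Fin 3, U *ᵥ Pi.single j 1 = ![u 0, u 1, u 2] j := by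
    intro j
    rw [Matrix.mulVec_single_one, hUdef, Matrix.col_transpose]
    rfl
  have hTcol : ∀ j : Fin 3, T *ᵥ Pi.single j 1 = ![t 0, t 1, t 2] j := by
    intro j
    rw [Matrix.mulVec_single_one, hTdef, Matrix.col_transpose]
    rfl
  have hUinv : ∀ j : Fin 3, U⁻¹ *ᵥ (![u 0, u 1, u 2] j) = Pi.single j 1 := by
    intro j
    rw [← hUcol j, Matrix.mulVec_mulVec,
      Matrix.nonsing_inv_mul U (Matrix.isUnit_iff_isUnit_det U |>.mp hUu), Matrix.one_mulVec]
  set M : Matrix (Fin 3) (Fin 3) K := T * U⁻¹ with hMdef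
  have hM3 : ∀ j : Fin 3, M *ᵥ (![u 0, u 1, u 2] j) = ![t 0, t 1, t 2] j := by
    intro j
    rw [hMdef, ← Matrix.mulVec_mulVec, hUinv j, hTcol j]
  have hM0 : M *ᵥ u 0 = t 0 := by simpa using hM3 0
  have hM1 : M *ᵥ u 1 = t 1 := by simpa using hM3 1
  have hM2 : M *ᵥ u 2 = t 2 := by simpa using hM3 2
  have hMall : ∀ i : Fin 4, M *ᵥ u i = t i := by
    intro i
    fin_cases i
    · exact hM0
    · exact hM1
    · exact hM2
    · show M *ᵥ u 3 = t 3
      rw [hu3, ht3, Matrix.mulVec_add, Matrix.mulVec_add, hM0, hM1, hM2]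
  have hMunit : IsUnit M := hTu.mul (Matrix.isUnit_nonsing_inv_iff.mpr hUu)
  refine ⟨M, hMunit, hMall, ?_⟩
  intro B hB
  obtain ⟨c0, hc0⟩ := hB 0
  obtain ⟨c1, hc1⟩ := hB 1
  obtain ⟨c2, hc2⟩ := hB 2
  obtain ⟨c3, hc3⟩ := hB 3
  have e1 : (c0 : K) • t 0 + (c1 : K) • t 1 + (c2 : K) • t 2
      = (c3 : K) • t 0 + (c3 : K) • t 1 + (c3 : K) • t 2 := by
    have h := hc3
    rw [hu3, ht3, Matrix.mulVec_add, Matrix.mulVec_add, hc0, hc1, hc2, smul_add, smul_add] at h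
    exact h
  have key : ∀ i : Fin 3, (![(c0 : K) - c3, (c1 : K) - c3, (c2 : K) - c3]) i = 0 := by
    apply Fintype.linearIndependent_iff.mp ht
    rw [Fin.sum_univ_three]
    simp only [Matrix.cons_val_zero, Matrix.cons_val_one, Matrix.head_cons,
      Matrix.cons_val_two, Matrix.tail_cons]
    have expand : ((c0 : K) - c3) • t 0 + ((c1 : K) - c3) • t 1 + ((c2 : K) - c3) • t 2
        = ((c0 : K) • t 0 + (c1 : K) • t 1 + (c2 : K) • t 2)
          - ((c3 : K) • t 0 + (c3 : K) • t 1 + (c3 : K) • t 2) := by module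
    rw [expand, e1, sub_self]
  have hc0' : (c0 : K) = c3 := sub_eq_zero.mp (by simpa using key 0)
  have hc1' : (c1 : K) = c3 := sub_eq_zero.mp (by simpa using key 1)
  have hc2' : (c2 : K) = c3 := sub_eq_zero.mp (by simpa using key 2)
  refine ⟨c3, ?_⟩
  have hBM : ∀ j : Fin 3, (B - (c3 : K) • M) *ᵥ (![u 0, u 1, u 2] j) = 0 := by
    intro j
    rw [Matrix.sub_mulVec, Matrix.smul_mulVec]
    fin_cases j
    · show B *ᵥ u 0 - (c3 : K) • (M *ᵥ u 0) = 0
      rw [hM0, hc0, hc0', sub_self]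
    · show B *ᵥ u 1 - (c3 : K) • (M *ᵥ u 1) = 0
      rw [hM1, hc1, hc1', sub_self]
    · show B *ᵥ u 2 - (c3 : K) • (M *ᵥ u 2) = 0
      rw [hM2, hc2, hc2', sub_self]
  have hcard : Fintype.card (Fin 3) = Module.finrank K (Fin 3 → K) := by simp
  set Bu := basisOfLinearIndependentOfCardEqFinrank hu hcard with hBu
  have hBuc : ⇑Bu = ![u 0, u 1, u 2] := coe_basisOfLinearIndependentOfCardEqFinrank hu hcard
  have hDlin : (B - (c3 : K) • M).mulVecLin = 0 := by
    apply Bu.ext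
    intro j
    rw [Matrix.mulVecLin_apply]
    have : Bu j = ![u 0, u 1, u 2] j := by rw [hBuc]
    rw [this, hBM j]
    simp
  have hD : B - (c3 : K) • M = 0 := by
    ext i j
    have h0 := congrFun (LinearMap.congr_fun hDlin (Pi.single j 1)) i
    rw [Matrix.mulVecLin_apply, Matrix.mulVec_single] at h0
    simpa using h0
  rw [sub_eq_zero] at hD
  exact hD

lemma exists_frame (p : Fin 4 → ℙ K (Fin 3 → K))
    (hgen : ∀ i j l : Fin 4, i ≠ j → i ≠ l → j ≠ l →
      LinearIndependent K ![(p i).rep, (p j).rep, (p l).rep]) :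
    ∃ u : Fin 4 → (Fin 3 → K), (∀ i, ∃ c : Kˣ, u i = (c : K) • (p i).rep) ∧
      LinearIndependent K ![u 0, u 1, u 2] ∧ u 3 = u 0 + u 1 + u 2 := by
  set v : Fin 4 → (Fin 3 → K) := fun i => (p i).rep with hv
  have li : LinearIndependent K ![v 0, v 1, v 2] :=
    hgen 0 1 2 (by decide) (by decide) (by decide)
  have hcard : Fintype.card (Fin 3) = Module.finrank K (Fin 3 → K) := by simp
  set B := basisOfLinearIndependentOfCardEqFinrank li hcard with hBdef
  have hB : ⇑B = ![v 0, v 1, v 2] := coe_basisOfLinearIndependentOfCardEqFinrank li hcard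
  set a : Fin 3 → K := fun j => B.repr (v 3) j with ha
  have hsum : a 0 • v 0 + a 1 • v 1 + a 2 • v 2 = v 3 := by
    have h := B.sum_repr (v 3)
    rw [Fin.sum_univ_three] at h
    simpa [hB, ha] using h
  have h3 : v 3 = a 0 • v 0 + a 1 • v 1 + a 2 • v 2 := hsum.symm
  have hne0 : a 0 ≠ 0 := by
    intro hj
    have h12 := Fintype.linearIndependent_iff.mp
      (hgen 1 2 3 (by decide) (by decide) (by decide)) ![a 1, a 2, -1] ?_ 2
    · norm_num [Matrix.cons_val_two] at h12
    · rw [Fin.sum_univ_three]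
      simp only [Matrix.cons_val_zero, Matrix.cons_val_one, Matrix.head_cons,
        Matrix.cons_val_two, Matrix.tail_cons]
      show a 1 • v 1 + a 2 • v 2 + (-1 : K) • v 3 = 0
      rw [h3, hj]
      module
  have hne1 : a 1 ≠ 0 := by
    intro hj
    have h12 := Fintype.linearIndependent_iff.mp
      (hgen 0 2 3 (by decide) (by decide) (by decide)) ![a 0, a 2, -1] ?_ 2
    · norm_num [Matrix.cons_val_two] at h12
    · rw [Fin.sum_univ_three]
      simp only [Matrix.cons_val_zero, Matrix.cons_val_one, Matrix.head_cons,
        Matrix.cons_val_two, Matrix.tail_cons]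
      show a 0 • v 0 + a 2 • v 2 + (-1 : K) • v 3 = 0
      rw [h3, hj]
      module
  have hne2 : a 2 ≠ 0 := by
    intro hj
    have h12 := Fintype.linearIndependent_iff.mp
      (hgen 0 1 3 (by decide) (by decide) (by decide)) ![a 0, a 1, -1] ?_ 2
    · norm_num [Matrix.cons_val_two] at h12
    · rw [Fin.sum_univ_three]
      simp only [Matrix.cons_val_zero, Matrix.cons_val_one, Matrix.head_cons,
        Matrix.cons_val_two, Matrix.tail_cons]
      show a 0 • v 0 + a 1 • v 1 + (-1 : K) • v 3 = 0
      rw [h3, hj]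
      module
  refine ⟨![a 0 • v 0, a 1 • v 1, a 2 • v 2, v 3], ?_, ?_, ?_⟩
  · intro i
    fin_cases i
    · exact ⟨Units.mk0 (a 0) hne0, by simp [hv]⟩
    · exact ⟨Units.mk0 (a 1) hne1, by simp [hv]⟩
    · exact ⟨Units.mk0 (a 2) hne2, by simp [hv]⟩
    · exact ⟨1, by simp [hv]⟩
  · have h := li.units_smul ![Units.mk0 (a 0) hne0, Units.mk0 (a 1) hne1, Units.mk0 (a 2) hne2]
    convert h using 1
    funext i
    fin_cases i <;> simp [Units.smul_def]
  · simp only [Matrix.cons_val_zero, Matrix.cons_val_one, Matrix.head_cons,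
      Matrix.cons_val_two, Matrix.tail_cons, Matrix.cons_val_three]
    exact h3


lemma mulAct_eq_of {F : Type} [Field F] {n : ℕ} (A : Matrix (Fin n) (Fin n) F) (hA : IsUnit A)
    (P Q : ℙ F (Fin n → F)) (s : F) (h : A *ᵥ P.rep = s • Q.rep) :
    mulAct A hA P = Q := by
  unfold mulAct
  rw [← Projectivization.mk_rep Q]
  exact (Projectivization.mk_eq_mk_iff' F _ _ _ _).mpr ⟨s, h.symm⟩

variable [PerfectField k] [IsAlgClosure k K]

/-- An element of the algebraic closure fixed by every automorphism lies in the base field. -/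
lemma fixed_mem (x : K) (hx : ∀ g : K ≃ₐ[k] K, g x = x) :
    ∃ y : k, algebraMap k K y = x := by
  have : IsAlgClosed K := IsAlgClosure.isAlgClosed k
  have hint : IsIntegral k x := Algebra.IsIntegral.isIntegral x
  by_contra hc
  push_neg at hc
  have hnr : x ∉ (algebraMap k K).range := by
    rintro ⟨y, hy⟩; exact hc y hy
  have h2 : 2 ≤ (minpoly k x).natDegree := (minpoly.two_le_natDegree_iff hint).2 hnr
  have hsep : (minpoly k x).Separable := Algebra.IsSeparable.isSeparable k x
  have hsplit : Polynomial.Splits ((minpoly k x).map (algebraMap k K)) :=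
    IsAlgClosed.splits _
  have hcard : Fintype.card ((minpoly k x).rootSet K) = (minpoly k x).natDegree :=
    Polynomial.card_rootSet_eq_natDegree hsep hsplit
  have hxr : x ∈ (minpoly k x).rootSet K := by
    rw [Polynomial.mem_rootSet]
    exact ⟨minpoly.ne_zero hint, minpoly.aeval k x⟩
  obtain ⟨⟨y, hy⟩, hne⟩ :
      ∃ z : ((minpoly k x).rootSet K), z ≠ (⟨x, hxr⟩ : ((minpoly k x).rootSet K)) :=
    Fintype.exists_ne_of_one_lt_card (by omega) _
  have hyx : y ≠ x := fun h => hne (Subtype.ext h)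
  have hev : (Polynomial.aeval y) (minpoly k x) = 0 := (Polynomial.mem_rootSet.mp hy).2
  obtain ⟨σ, hσ⟩ := minpoly.exists_algEquiv_of_root (Algebra.IsAlgebraic.isAlgebraic x) hev
  exact hyx (σ.injective (hσ.trans (hx σ).symm))


open Matrix

/-- Lemma 2.6, [Schneider, Lemma 6.11].
Let `k` be a perfect field with algebraic closure `K`, let `L/k` be a finite extension inside
`K`, and let `p₁,…,p₄, q₁,…,q₄ ∈ ℙ²(L)` be pairwise distinct points, no three of the `pᵢ`
collinear and no three of the `qᵢ` collinear, with both sets Galois-stable, such that for every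
`g ∈ Gal(K/k)` some permutation `σ ∈ S₄` satisfies `pᵢᵍ = p_{σ(i)}` and `qᵢᵍ = q_{σ(i)}`.
Then some `α ∈ PGL₃(k)` satisfies `α(pᵢ) = qᵢ` for all `i`. -/
theorem stmt1 (p q : Fin 4 → ℙ K (Fin 3 → K))
    (hfield : ∃ L : IntermediateField k K, FiniteDimensional k ↥L ∧
      (∀ i, DefinedOver L (p i)) ∧ (∀ i, DefinedOver L (q i)))
    (hpinj : Function.Injective p) (hqinj : Function.Injective q)
    (hpgen : ∀ i j l : Fin 4, i ≠ j → i ≠ l → j ≠ l →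
      LinearIndependent K ![(p i).rep, (p j).rep, (p l).rep])
    (hqgen : ∀ i j l : Fin 4, i ≠ j → i ≠ l → j ≠ l →
      LinearIndependent K ![(q i).rep, (q j).rep, (q l).rep])
    (hpstab : ∀ g : K ≃ₐ[k] K, galAct g '' Set.range p = Set.range p)
    (hqstab : ∀ g : K ≃ₐ[k] K, galAct g '' Set.range q = Set.range q)
    (hcompat : ∀ g : K ≃ₐ[k] K, ∃ σ : Equiv.Perm (Fin 4),
      (∀ i, galAct g (p i) = p (σ i)) ∧ (∀ i, galAct g (q i) = q (σ i))) :
    ∃ M : GL (Fin 3) k, ∀ i, glAct M (p i) = q i := by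
  classical
  obtain ⟨u, hup, huli, hu3⟩ := exists_frame p hpgen
  obtain ⟨t, htq, htli, ht3⟩ := exists_frame q hqgen
  obtain ⟨M, hMunit, hMmap, hMuniq⟩ := exists_matrix u t huli htli hu3 ht3
  have hgne : ∀ (g : K ≃ₐ[k] K) (x : K), x ≠ 0 → g x ≠ 0 := by
    intro g x hx h
    exact hx (g.injective (by rw [h, map_zero]))
  have hmap : ∀ (g : K ≃ₐ[k] K) (A : Matrix (Fin 3) (Fin 3) K) (x : Fin 3 → K),
      (A.map g) *ᵥ (fun l => g (x l)) = fun l => g ((A *ᵥ x) l) := by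
    intro g A x
    funext l
    simp [Matrix.mulVec, dotProduct, Matrix.map_apply, map_sum]
  have hrep : ∀ (g : K ≃ₐ[k] K) (P Q : ℙ K (Fin 3 → K)), galAct g P = Q →
      ∃ a : Kˣ, (fun l => g (P.rep l)) = (a : K) • Q.rep := by
    intro g P Q h
    unfold galAct at h
    rw [← Projectivization.mk_rep Q] at h
    obtain ⟨a, ha⟩ := (Projectivization.mk_eq_mk_iff K _ _ _ _).mp h
    exact ⟨a, by rw [← ha, Units.smul_def]⟩
  have hgal : ∀ g : K ≃ₐ[k] K, ∃ c : Kˣ, M.map g = (c : K) • M := by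
    intro g
    obtain ⟨σ, hpσ, hqσ⟩ := hcompat g
    apply hMuniq
    intro j
    obtain ⟨a, ha⟩ := hrep g (p (σ.symm j)) (p j)
      (by rw [hpσ (σ.symm j), Equiv.apply_symm_apply])
    obtain ⟨b, hb⟩ := hrep g (q (σ.symm j)) (q j)
      (by rw [hqσ (σ.symm j), Equiv.apply_symm_apply])
    obtain ⟨ci, hci⟩ := hup (σ.symm j)
    obtain ⟨cj, hcj⟩ := hup j
    obtain ⟨di, hdi⟩ := htq (σ.symm j)
    obtain ⟨dj, hdj⟩ := htq j
    have h1 : (fun l => g (u (σ.symm j) l)) = (g ci * (a : K)) • (p j).rep := by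
      funext l
      rw [hci]
      simp only [Pi.smul_apply, smul_eq_mul, _root_.map_mul]
      rw [congrFun ha l]
      simp only [Pi.smul_apply, smul_eq_mul]
      ring
    have hXne : (g ci * (a : K)) ≠ 0 := mul_ne_zero (hgne g _ ci.ne_zero) a.ne_zero
    have h2 : u j = ((cj : K) * (g ci * (a : K))⁻¹) • (fun l => g (u (σ.symm j) l)) := by
      rw [h1, hcj, smul_smul, mul_assoc, inv_mul_cancel₀ hXne, mul_one]
    have h3 : (fun l => g (t (σ.symm j) l)) = (g di * (b : K)) • (q j).rep := by
      funext l
      rw [hdi]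
      simp only [Pi.smul_apply, smul_eq_mul, _root_.map_mul]
      rw [congrFun hb l]
      simp only [Pi.smul_apply, smul_eq_mul]
      ring
    have hqrep : (q j).rep = ((dj : K))⁻¹ • t j := by
      rw [hdj, smul_smul, inv_mul_cancel₀ dj.ne_zero, one_smul]
    have hsne : ((cj : K) * (g ci * (a : K))⁻¹ * (g di * (b : K)) * ((dj : K))⁻¹) ≠ 0 :=
      mul_ne_zero (mul_ne_zero (mul_ne_zero cj.ne_zero (inv_ne_zero hXne))
        (mul_ne_zero (hgne g _ di.ne_zero) b.ne_zero)) (inv_ne_zero dj.ne_zero)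
    refine ⟨Units.mk0 _ hsne, ?_⟩
    calc (M.map (g : K → K)) *ᵥ u j
        = ((cj : K) * (g ci * (a : K))⁻¹) •
            ((M.map (g : K → K)) *ᵥ (fun l => g (u (σ.symm j) l))) := by
          rw [← Matrix.mulVec_smul, ← h2]
      _ = ((cj : K) * (g ci * (a : K))⁻¹) • (fun l => g ((M *ᵥ u (σ.symm j)) l)) := by
          rw [hmap]
      _ = ((cj : K) * (g ci * (a : K))⁻¹) • (fun l => g (t (σ.symm j) l)) := by
          rw [hMmap (σ.symm j)]
      _ = ((cj : K) * (g ci * (a : K))⁻¹) • ((g di * (b : K)) • (((dj : K))⁻¹ • t j)) := by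
          rw [h3, hqrep]
      _ = (((Units.mk0 _ hsne : Kˣ)) : K) • t j := by
          rw [smul_smul, smul_smul, Units.val_mk0]
  have htne : t 0 ≠ 0 := by
    obtain ⟨d0, hd0⟩ := htq 0
    rw [hd0]
    exact smul_ne_zero d0.ne_zero (Projectivization.rep_nonzero _)
  have hMne : M ≠ 0 := by
    intro h
    apply htne
    rw [← hMmap 0, h, Matrix.zero_mulVec]
  obtain ⟨i0, j0, hij⟩ : ∃ i0 j0, M i0 j0 ≠ 0 := by
    by_contra h
    push_neg at h
    apply hMne
    ext a b
    simpa using h a b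
  set e : K := M i0 j0 with he
  set N : Matrix (Fin 3) (Fin 3) K := e⁻¹ • M with hN
  have hfix : ∀ (a b : Fin 3) (g : K ≃ₐ[k] K), g (N a b) = N a b := by
    intro a b g
    obtain ⟨c, hc⟩ := hgal g
    have hentry : ∀ x y, g (M x y) = (c : K) * M x y := by
      intro x y
      have h0 := congrFun (congrFun hc x) y
      simpa [Matrix.map_apply] using h0
    have hNab : ∀ x y, N x y = e⁻¹ * M x y := by
      intro x y
      simp [hN]
    have hcne : (c : K) ≠ 0 := c.ne_zero
    rw [hNab a b, _root_.map_mul, map_inv₀, he, hentry i0 j0, hentry a b, _root_.mul_inv_rev,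
      mul_assoc, inv_mul_cancel_left₀ hcne]
  choose n hn using fun a b => fixed_mem (N a b) (hfix a b)
  have hmapN : (Matrix.of n).map (algebraMap k K) = N := by
    ext a b
    exact hn a b
  have hdetM : M.det ≠ 0 := ((Matrix.isUnit_iff_isUnit_det M).mp hMunit).ne_zero
  have hNdet : N.det ≠ 0 := by
    rw [hN, Matrix.det_smul]
    exact mul_ne_zero (pow_ne_zero _ (inv_ne_zero hij)) hdetM
  have hndet : (Matrix.of n).det ≠ 0 := by
    intro h
    apply hNdet
    rw [← hmapN, ← RingHom.mapMatrix_apply, ← RingHom.map_det, h, map_zero]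
  have hnunit : IsUnit (Matrix.of n) :=
    (Matrix.isUnit_iff_isUnit_det _).mpr (isUnit_iff_ne_zero.mpr hndet)
  refine ⟨hnunit.unit, ?_⟩
  intro i
  obtain ⟨ci, hci⟩ := hup i
  obtain ⟨di, hdi⟩ := htq i
  have hrepu : (p i).rep = ((ci : K))⁻¹ • u i := by
    rw [hci, smul_smul, inv_mul_cancel₀ ci.ne_zero, one_smul]
  have hvec : ((Matrix.of n).map (algebraMap k K)) *ᵥ (p i).rep
      = (((ci : K))⁻¹ * (e⁻¹ * (di : K))) • (q i).rep := by
    rw [hmapN, hrepu, Matrix.mulVec_smul, hN, Matrix.smul_mulVec, hMmap i, hdi,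
      smul_smul, smul_smul, mul_assoc]
  unfold glAct
  apply mulAct_eq_of _ _ _ _ (((ci : K))⁻¹ * (e⁻¹ * (di : K)))
  rw [hnunit.unit_spec]
  exact hvec

end CremonaPaper
end

section
/- Let k be a perfect field with algebraic closure k̄, let F/k be a finite extension inside k̄, and let p₁,p₂,p₃, q₁,q₂,q₃ ∈ ℙ¹(F) be such that: the p_i are pairwise distinct, the q_i are pairwise distinct, the sets {p₁,p₂,p₃} and {q₁,q₂,q₃} are stable under the coordinatewise Gal(k̄/k)-action, and for every g ∈ Gal(k̄/k) there exists σ ∈ S₃ with p_i^g = p_{σ(i)} and q_i^g = q_{σ(i)} for i = 1,2,3. Then there exists α ∈ PGL₂(k) such that α(p_i) = q_i for i = 1,2,3. -/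
open scoped LinearAlgebra.Projectivization

namespace CremonaPaper

variable {k K : Type} [Field k] [Field K] [Algebra k K]

section Helpers

variable {F : Type} [Field F]

/-- The cross product (determinant) of two vectors in `F²`. -/
def cross (u w : Fin 2 → F) : F := u 0 * w 1 - u 1 * w 0

lemma vec_ne_zero_iff {u : Fin 2 → F} : u ≠ 0 ↔ u 0 ≠ 0 ∨ u 1 ≠ 0 := by
  constructor
  · intro h
    by_contra hc
    push_neg at hc
    exact h (funext fun i => by fin_cases i <;> simp [hc.1, hc.2])
  · rintro (h | h) rfl <;> simp at h

lemma cross_self (u : Fin 2 → F) : cross u u = 0 := by simp [cross]; ring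

lemma cross_ne_zero {u w : Fin 2 → F} (hu : u ≠ 0) (hw : w ≠ 0)
    (h : Projectivization.mk F u hu ≠ Projectivization.mk F w hw) : cross u w ≠ 0 := by
  intro hc
  apply h
  rw [Projectivization.mk_eq_mk_iff' F u w hu hw]
  rcases vec_ne_zero_iff.mp hw with h0 | h1
  · refine ⟨u 0 / w 0, funext fun i => ?_⟩
    fin_cases i <;> simp only [Pi.smul_apply, smul_eq_mul, Fin.zero_eta, Fin.mk_one, Fin.isValue]
    · field_simp
    · field_simp
      simp only [cross] at hc
      linear_combination hc
  · refine ⟨u 1 / w 1, funext fun i => ?_⟩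
    fin_cases i <;> simp only [Pi.smul_apply, smul_eq_mul, Fin.zero_eta, Fin.mk_one, Fin.isValue]
    · field_simp
      simp only [cross] at hc
      linear_combination -hc
    · field_simp

lemma indep {u w : Fin 2 → F} (hD : cross u w ≠ 0) {r t : F}
    (h : r • u + t • w = 0) : r = 0 ∧ t = 0 := by
  have h0 := congrFun h 0
  have h1 := congrFun h 1
  simp only [Pi.add_apply, Pi.smul_apply, smul_eq_mul, Pi.zero_apply] at h0 h1
  constructor
  · have : r * cross u w = 0 := by simp only [cross]; linear_combination w 1 * h0 - w 0 * h1
    exact (mul_eq_zero.mp this).resolve_right hD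
  · have : t * cross u w = 0 := by simp only [cross]; linear_combination (-(u 1)) * h0 + u 0 * h1
    exact (mul_eq_zero.mp this).resolve_right hD

lemma decomp {u w : Fin 2 → F} (hD : cross u w ≠ 0) (z : Fin 2 → F) :
    z = (cross z w / cross u w) • u + (cross u z / cross u w) • w := by
  funext i
  fin_cases i <;>
  · simp only [Pi.add_apply, Pi.smul_apply, smul_eq_mul, Fin.zero_eta, Fin.mk_one, Fin.isValue]
    field_simp
    simp only [cross]
    ring

lemma mulVec_fin2 (A : Matrix (Fin 2) (Fin 2) F) (x : Fin 2 → F) (i : Fin 2) :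
    A.mulVec x i = A i 0 * x 0 + A i 1 * x 1 := by
  simp [Matrix.mulVec, dotProduct, Fin.sum_univ_two]

lemma cross_mulVec (A : Matrix (Fin 2) (Fin 2) F) (u w : Fin 2 → F) :
    cross (A.mulVec u) (A.mulVec w) = A.det * cross u w := by
  simp only [cross, mulVec_fin2, Matrix.det_fin_two]
  ring

lemma cross_smul_smul (r s : F) (u w : Fin 2 → F) :
    cross (r • u) (s • w) = r * s * cross u w := by
  simp only [cross, Pi.smul_apply, smul_eq_mul]
  ring

lemma matrix_ext_of_basis {u w : Fin 2 → F} (hD : cross u w ≠ 0)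
    {A B : Matrix (Fin 2) (Fin 2) F} (hu : A.mulVec u = B.mulVec u)
    (hw : A.mulVec w = B.mulVec w) : A = B := by
  have key : ∀ z, A.mulVec z = B.mulVec z := by
    intro z
    have hz := decomp hD z
    rw [hz, Matrix.mulVec_add, Matrix.mulVec_add, Matrix.mulVec_smul, Matrix.mulVec_smul,
      Matrix.mulVec_smul, Matrix.mulVec_smul, hu, hw]
  ext i j
  have h0 := congrFun (key (Pi.single j 1)) i
  rw [Matrix.mulVec_single, Matrix.mulVec_single] at h0
  simpa using h0

end Helpers



section Construction

variable {F : Type} [Field F]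

/-- `A` maps each `p i` to `q i` projectively. -/
def Maps (A : Matrix (Fin 2) (Fin 2) F) (p q : Fin 3 → ℙ F (Fin 2 → F)) : Prop :=
  ∀ i, ∃ c : F, c ≠ 0 ∧ A.mulVec (p i).rep = c • (q i).rep

theorem exists_normalized (p q : Fin 3 → ℙ F (Fin 2 → F))
    (hp : Function.Injective p) (hq : Function.Injective q) :
    ∃ M : Matrix (Fin 2) (Fin 2) F, M.det ≠ 0 ∧ Maps M p q ∧
      ∀ N : Matrix (Fin 2) (Fin 2) F, N.det ≠ 0 → Maps N p q →
        ∃ γ : F, γ ≠ 0 ∧ N = γ • M := by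
  set v : Fin 3 → Fin 2 → F := fun i => (p i).rep with hv_def
  set w : Fin 3 → Fin 2 → F := fun i => (q i).rep with hw_def
  have hv : ∀ i, v i ≠ 0 := fun i => (p i).rep_nonzero
  have hw : ∀ i, w i ≠ 0 := fun i => (q i).rep_nonzero
  have hping : ∀ i j, i ≠ j → Projectivization.mk F (v i) (hv i) ≠
      Projectivization.mk F (v j) (hv j) := by
    intro i j hij
    simpa only [hv_def, Projectivization.mk_rep] using fun h => hij (hp h)
  have hqing : ∀ i j, i ≠ j → Projectivization.mk F (w i) (hw i) ≠
      Projectivization.mk F (w j) (hw j) := by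
    intro i j hij
    simpa only [hw_def, Projectivization.mk_rep] using fun h => hij (hq h)
  have hDv : cross (v 0) (v 1) ≠ 0 := cross_ne_zero _ _ (hping 0 1 (by decide))
  have hDw : cross (w 0) (w 1) ≠ 0 := cross_ne_zero _ _ (hqing 0 1 (by decide))
  set Dv := cross (v 0) (v 1) with hDv_def
  set Dw := cross (w 0) (w 1) with hDw_def
  set a := cross (v 2) (v 1) / Dv with ha_def
  set b := cross (v 0) (v 2) / Dv with hb_def
  set c := cross (w 2) (w 1) / Dw with hc_def
  set d := cross (w 0) (w 2) / Dw with hd_def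
  have ha : a ≠ 0 := div_ne_zero (cross_ne_zero _ _ (hping 2 1 (by decide))) hDv
  have hb : b ≠ 0 := div_ne_zero (cross_ne_zero _ _ (hping 0 2 (by decide))) hDv
  have hc : c ≠ 0 := div_ne_zero (cross_ne_zero _ _ (hqing 2 1 (by decide))) hDw
  have hd : d ≠ 0 := div_ne_zero (cross_ne_zero _ _ (hqing 0 2 (by decide))) hDw
  have hdecv : v 2 = a • v 0 + b • v 1 := decomp hDv (v 2)
  have hdecw : w 2 = c • w 0 + d • w 1 := decomp hDw (w 2)
  -- the matrix
  set M : Matrix (Fin 2) (Fin 2) F := Matrix.of fun i j =>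
    b * c * w 0 i * (![v 1 1, -(v 1 0)] j) + a * d * w 1 i * (![-(v 0 1), v 0 0] j) with hM_def
  have hkey : ∀ x : Fin 2 → F,
      M.mulVec x = (b * c * cross x (v 1)) • w 0 + (a * d * cross (v 0) x) • w 1 := by
    intro x
    funext i
    simp only [hM_def, mulVec_fin2, Matrix.of_apply, Pi.add_apply, Pi.smul_apply, smul_eq_mul,
      cross, Matrix.cons_val_zero, Matrix.cons_val_one, Matrix.head_cons]
    ring
  have hM0 : M.mulVec (v 0) = (b * c * Dv) • w 0 := by
    rw [hkey, cross_self, hDv_def]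
    simp
  have hM1 : M.mulVec (v 1) = (a * d * Dv) • w 1 := by
    rw [hkey, cross_self, hDv_def]
    simp
  have hca : cross (v 2) (v 1) = a * Dv := by
    rw [ha_def, div_mul_cancel₀ _ hDv]
  have hcb : cross (v 0) (v 2) = b * Dv := by
    rw [hb_def, div_mul_cancel₀ _ hDv]
  have hM2 : M.mulVec (v 2) = (a * b * Dv) • w 2 := by
    rw [hkey, hca, hcb, hdecw, smul_add, smul_smul, smul_smul]
    congr 1 <;> congr 1 <;> ring
  have hdet : M.det ≠ 0 := by
    have h1 : cross (M.mulVec (v 0)) (M.mulVec (v 1)) = M.det * Dv := by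
      rw [cross_mulVec]
    rw [hM0, hM1, cross_smul_smul] at h1
    intro h
    rw [h, zero_mul] at h1
    have : b * c * Dv * (a * d * Dv) * Dw ≠ 0 :=
      mul_ne_zero (mul_ne_zero (mul_ne_zero (mul_ne_zero hb hc) hDv)
        (mul_ne_zero (mul_ne_zero ha hd) hDv)) hDw
    exact this h1
  refine ⟨M, hdet, ?_, ?_⟩
  · -- Maps M p q
    intro i
    fin_cases i
    · exact ⟨b * c * Dv, mul_ne_zero (mul_ne_zero hb hc) hDv, hM0⟩
    · exact ⟨a * d * Dv, mul_ne_zero (mul_ne_zero ha hd) hDv, hM1⟩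
    · exact ⟨a * b * Dv, mul_ne_zero (mul_ne_zero ha hb) hDv, hM2⟩
  · -- uniqueness up to scalar
    intro N hN hmaps
    obtain ⟨α, hα, hN0⟩ := hmaps 0
    obtain ⟨β, hβ, hN1⟩ := hmaps 1
    obtain ⟨γ', hγ', hN2⟩ := hmaps 2
    have hN0' : N.mulVec (v 0) = α • w 0 := hN0
    have hN1' : N.mulVec (v 1) = β • w 1 := hN1
    have hN2' : N.mulVec (v 2) = γ' • w 2 := hN2
    have heq : (a * α) • w 0 + (b * β) • w 1 = (γ' * c) • w 0 + (γ' * d) • w 1 := by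
      have h2 : N.mulVec (v 2) = (a * α) • w 0 + (b * β) • w 1 := by
        rw [hdecv, Matrix.mulVec_add, Matrix.mulVec_smul, Matrix.mulVec_smul, hN0', hN1',
          smul_smul, smul_smul]
      rw [← h2, hN2', hdecw, smul_add, smul_smul, smul_smul]
    have hzero : (a * α - γ' * c) • w 0 + (b * β - γ' * d) • w 1 = 0 := by
      have expand : (a * α - γ' * c) • w 0 + (b * β - γ' * d) • w 1 =
          ((a * α) • w 0 + (b * β) • w 1) - ((γ' * c) • w 0 + (γ' * d) • w 1) := by
        rw [sub_smul, sub_smul]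
        abel
      rw [expand, heq, sub_self]
    obtain ⟨e1, e2⟩ := indep hDw hzero
    have haα : a * α = γ' * c := sub_eq_zero.mp e1
    have hbβ : b * β = γ' * d := sub_eq_zero.mp e2
    refine ⟨γ' / (a * b * Dv), div_ne_zero hγ' (mul_ne_zero (mul_ne_zero ha hb) hDv), ?_⟩
    apply matrix_ext_of_basis hDv
    · rw [Matrix.smul_mulVec, hM0, hN0', smul_smul]
      congr 1
      rw [div_mul_eq_mul_div, eq_div_iff (mul_ne_zero (mul_ne_zero ha hb) hDv)]
      linear_combination b * Dv * haα
    · rw [Matrix.smul_mulVec, hM1, hN1', smul_smul]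
      congr 1
      rw [div_mul_eq_mul_div, eq_div_iff (mul_ne_zero (mul_ne_zero ha hb) hDv)]
      linear_combination a * Dv * hbβ

end Construction






lemma mulAct_def {F : Type} [Field F] {n : ℕ} (A : Matrix (Fin n) (Fin n) F)
    (hA : IsUnit A) (P : ℙ F (Fin n → F)) (h : A.mulVec P.rep ≠ 0) :
    mulAct A hA P = Projectivization.mk F (A.mulVec P.rep) h := rfl

lemma mulAct_congr {F : Type} [Field F] {n : ℕ} {A B : Matrix (Fin n) (Fin n) F}
    (h : A = B) (hA : IsUnit A) (hB : IsUnit B) (P : ℙ F (Fin n → F)) :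
    mulAct A hA P = mulAct B hB P := by subst h; rfl

lemma mulAct_eq_of_rep {F : Type} [Field F] {A : Matrix (Fin 2) (Fin 2) F} (hA : IsUnit A)
    {P Q : ℙ F (Fin 2 → F)} {c : F} (hc : c ≠ 0) (h : A.mulVec P.rep = c • Q.rep) :
    mulAct A hA P = Q := by
  have hne : A.mulVec P.rep ≠ 0 := by
    rw [h]
    exact smul_ne_zero hc Q.rep_nonzero
  rw [mulAct_def A hA P hne]
  conv_rhs => rw [← Q.mk_rep]
  rw [Projectivization.mk_eq_mk_iff']
  exact ⟨c, h.symm⟩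

lemma galAct_rep_aux (g : K ≃ₐ[k] K) (P : ℙ K (Fin 2 → K)) :
    (fun s => g (P.rep s)) ≠ (0 : Fin 2 → K) := by
  intro hh
  apply P.rep_nonzero
  funext s
  exact g.injective (by simpa using congrFun hh s)

lemma galAct_def (g : K ≃ₐ[k] K) (P : ℙ K (Fin 2 → K)) :
    galAct g P = Projectivization.mk K (fun s => g (P.rep s)) (galAct_rep_aux g P) := rfl

lemma galAct_rep (g : K ≃ₐ[k] K) (P : ℙ K (Fin 2 → K)) :
    ∃ t : Kˣ, (galAct g P).rep = (t : K) • fun s => g (P.rep s) := by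
  obtain ⟨t, ht⟩ := Projectivization.exists_smul_eq_mk_rep K
    (fun s => g (P.rep s)) (galAct_rep_aux g P)
  refine ⟨t, ?_⟩
  rw [galAct_def]
  rw [← ht]
  rfl

variable [PerfectField k] [IsAlgClosure k K]

lemma fixed_mem_range (x : K) (hx : ∀ g : K ≃ₐ[k] K, g x = x) :
    ∃ a : k, algebraMap k K a = x := by
  classical
  have halg : Algebra.IsAlgebraic k K := IsAlgClosure.isAlgebraic
  have hint : IsIntegral k x := (halg.isAlgebraic x).isIntegral
  have hsep : (minpoly k x).Separable := Algebra.IsSeparable.isSeparable k x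
  have hsplit : Polynomial.Splits ((minpoly k x).map (algebraMap k K)) :=
    Normal.splits inferInstance x
  have hmapne : (minpoly k x).map (algebraMap k K) ≠ 0 :=
    Polynomial.map_ne_zero (minpoly.ne_zero hint)
  have hroots : ∀ y ∈ ((minpoly k x).map (algebraMap k K)).roots, y = x := by
    intro y hy
    have h_ev : Polynomial.aeval y (minpoly k x) = 0 := by
      have := (Polynomial.mem_roots hmapne).mp hy
      rwa [Polynomial.IsRoot.def, Polynomial.eval_map, ← Polynomial.aeval_def] at this
    obtain ⟨σ, hσ⟩ := minpoly.exists_algEquiv_of_root (halg.isAlgebraic x) h_ev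
    -- hσ : σ y = x
    have := congrArg σ.symm hσ
    rw [σ.symm_apply_apply] at this
    rw [this, hx σ.symm]
  -- x is a root
  have hxroot : x ∈ ((minpoly k x).map (algebraMap k K)).roots := by
    rw [Polynomial.mem_roots hmapne, Polynomial.IsRoot.def, Polynomial.eval_map,
      ← Polynomial.aeval_def]
    exact minpoly.aeval k x
  -- roots are nodup
  have hnodup : ((minpoly k x).map (algebraMap k K)).roots.Nodup :=
    Polynomial.nodup_roots hsep.map
  have hrepl : ((minpoly k x).map (algebraMap k K)).roots =
      Multiset.replicate (Multiset.card ((minpoly k x).map (algebraMap k K)).roots) x :=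
    Multiset.eq_replicate.mpr ⟨rfl, hroots⟩
  have hcard1 : Multiset.card ((minpoly k x).map (algebraMap k K)).roots = 1 := by
    have hle : Multiset.card ((minpoly k x).map (algebraMap k K)).roots ≤ 1 := by
      have h1 := Multiset.nodup_iff_count_le_one.mp hnodup x
      conv at h1 => rw [hrepl, Multiset.count_replicate_self]
      exact h1
    have hpos : 0 < Multiset.card ((minpoly k x).map (algebraMap k K)).roots :=
      Multiset.card_pos_iff_exists_mem.mpr ⟨x, hxroot⟩
    omega
  have hdeg : (minpoly k x).natDegree = 1 := by
    rw [← Polynomial.natDegree_map (algebraMap k K), hsplit.natDegree_eq_card_roots, hcard1]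
  have := (minpoly.natDegree_eq_one_iff).mp hdeg
  obtain ⟨a, ha⟩ := this
  exact ⟨a, ha⟩



/-- Remark 2.7.
Let `k` be a perfect field with algebraic closure `K`, let `F/k` be a finite extension inside
`K`, and let `p₁,p₂,p₃, q₁,q₂,q₃ ∈ ℙ¹(F)` be points with the `pᵢ` pairwise distinct and the
`qᵢ` pairwise distinct, with both sets Galois-stable, such that for every `g ∈ Gal(K/k)` some
permutation `σ ∈ S₃` satisfies `pᵢᵍ = p_{σ(i)}` and `qᵢᵍ = q_{σ(i)}`.
Then some `α ∈ PGL₂(k)` satisfies `α(pᵢ) = qᵢ` for all `i`. -/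
theorem stmt2 (p q : Fin 3 → ℙ K (Fin 2 → K))
    (hfield : ∃ F : IntermediateField k K, FiniteDimensional k ↥F ∧
      (∀ i, DefinedOver F (p i)) ∧ (∀ i, DefinedOver F (q i)))
    (hpinj : Function.Injective p) (hqinj : Function.Injective q)
    (hpstab : ∀ g : K ≃ₐ[k] K, galAct g '' Set.range p = Set.range p)
    (hqstab : ∀ g : K ≃ₐ[k] K, galAct g '' Set.range q = Set.range q)
    (hcompat : ∀ g : K ≃ₐ[k] K, ∃ σ : Equiv.Perm (Fin 3),
      (∀ i, galAct g (p i) = p (σ i)) ∧ (∀ i, galAct g (q i) = q (σ i))) :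
    ∃ M : GL (Fin 2) k, ∀ i, glAct M (p i) = q i := by
  classical
  obtain ⟨M₀, hdet₀, hmaps₀, huniq₀⟩ := exists_normalized p q hpinj hqinj
  have hM₀ne : M₀ ≠ 0 := by
    intro h
    rw [h] at hdet₀
    simp [Matrix.det_fin_two] at hdet₀
  obtain ⟨i₀, j₀, hij⟩ : ∃ i j, M₀ i j ≠ 0 := by
    by_contra hcon
    push_neg at hcon
    exact hM₀ne (by ext i j; simpa using hcon i j)
  set e := M₀ i₀ j₀ with he_def
  have he : e ≠ 0 := hij
  set M : Matrix (Fin 2) (Fin 2) K := e⁻¹ • M₀ with hM_def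
  have hMdet : M.det ≠ 0 := by
    rw [hM_def, Matrix.det_smul]
    exact mul_ne_zero (pow_ne_zero _ (inv_ne_zero he)) hdet₀
  have hMe : M i₀ j₀ = 1 := by
    rw [hM_def, Matrix.smul_apply, smul_eq_mul, ← he_def, inv_mul_cancel₀ he]
  have hMmaps : Maps M p q := by
    intro i
    obtain ⟨c, hc, hcv⟩ := hmaps₀ i
    exact ⟨e⁻¹ * c, mul_ne_zero (inv_ne_zero he) hc, by
      rw [hM_def, Matrix.smul_mulVec, hcv, smul_smul]⟩
  have hMuniq : ∀ N : Matrix (Fin 2) (Fin 2) K, N.det ≠ 0 → Maps N p q →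
      ∃ γ : K, γ ≠ 0 ∧ N = γ • M := by
    intro N hN hm
    obtain ⟨γ₀, hγ₀, hNeq⟩ := huniq₀ N hN hm
    refine ⟨γ₀ * e, mul_ne_zero hγ₀ he, ?_⟩
    rw [hNeq, hM_def, smul_smul, mul_assoc, mul_inv_cancel₀ he, mul_one]
  -- Galois invariance of the entries of `M`
  have hfix : ∀ (g : K ≃ₐ[k] K) (i j : Fin 2), g (M i j) = M i j := by
    intro g i j
    obtain ⟨σ, hσp, hσq⟩ := hcompat g
    set Mg : Matrix (Fin 2) (Fin 2) K := M.map ⇑g with hMg_def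
    have hMgdet : Mg.det ≠ 0 := by
      have hdg : Mg.det = g M.det := by
        rw [hMg_def, show M.map ⇑g = (g : K →+* K).mapMatrix M from rfl]
        exact ((g : K →+* K).map_det M).symm
      rw [hdg]
      intro hzz
      exact hMdet (g.injective (by rw [map_zero]; exact hzz))
    have hMgmaps : Maps Mg p q := by
      intro j'
      set i' := σ.symm j' with hi'_def
      obtain ⟨c, hc, hcv⟩ := hMmaps i'
      obtain ⟨t, ht⟩ := galAct_rep g (p i')
      obtain ⟨u, hu⟩ := galAct_rep g (q i')
      have hgalp : galAct g (p i') = p j' := by rw [hσp i', hi'_def, Equiv.apply_symm_apply]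
      have hgalq : galAct g (q i') = q j' := by rw [hσq i', hi'_def, Equiv.apply_symm_apply]
      have hpr : (p j').rep = (t : K) • fun s => g ((p i').rep s) := by rw [← hgalp]; exact ht
      have hqr : (q j').rep = (u : K) • fun s => g ((q i').rep s) := by rw [← hgalq]; exact hu
      have hune : (u : K) ≠ 0 := u.ne_zero
      have htne : (t : K) ≠ 0 := t.ne_zero
      have hgc : g c ≠ 0 := fun hzz => hc (g.injective (by rw [map_zero]; exact hzz))
      refine ⟨(t : K) * g c * (u : K)⁻¹,
        mul_ne_zero (mul_ne_zero htne hgc) (inv_ne_zero hune), ?_⟩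
      rw [hpr, Matrix.mulVec_smul, hqr]
      funext s
      simp only [Pi.smul_apply, smul_eq_mul]
      have hMgv : Mg.mulVec (fun s' => g ((p i').rep s')) s = g ((M.mulVec (p i').rep) s) := by
        simp only [hMg_def, mulVec_fin2, Matrix.map_apply, map_add, map_mul]
      rw [hMgv, hcv]
      simp only [Pi.smul_apply, smul_eq_mul, map_mul]
      field_simp
    obtain ⟨γ, hγ, hMgM⟩ := hMuniq Mg hMgdet hMgmaps
    have h1 : Mg i₀ j₀ = γ * M i₀ j₀ := by rw [hMgM]; simp [Matrix.smul_apply]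
    rw [hMe, mul_one] at h1
    have h2 : Mg i₀ j₀ = 1 := by rw [hMg_def, Matrix.map_apply, hMe, map_one]
    have hγ1 : γ = 1 := by rw [← h1, h2]
    have hMgMeq : Mg = M := by rw [hMgM, hγ1, one_smul]
    have h3 : Mg i j = M i j := by rw [hMgMeq]
    rwa [hMg_def, Matrix.map_apply] at h3
  -- descend the entries to `k`
  have hentry : ∀ i j, ∃ a : k, algebraMap k K a = M i j := fun i j =>
    fixed_mem_range (M i j) (fun g => hfix g i j)
  choose m hm using hentry
  set Mk : Matrix (Fin 2) (Fin 2) k := Matrix.of m with hMk_def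
  have hmap : Mk.map (algebraMap k K) = M := by
    ext i j
    simp only [hMk_def, Matrix.map_apply, Matrix.of_apply]
    exact hm i j
  have hdetk : Mk.det ≠ 0 := by
    intro h
    apply hMdet
    rw [← hmap, ← RingHom.mapMatrix_apply, ← RingHom.map_det, h, map_zero]
  have hUk : IsUnit Mk := (Matrix.isUnit_iff_isUnit_det Mk).mpr (isUnit_iff_ne_zero.mpr hdetk)
  refine ⟨hUk.unit, ?_⟩
  intro i
  obtain ⟨c, hc, hcv⟩ := hMmaps i
  have hcoe : ((hUk.unit : GL (Fin 2) k) : Matrix (Fin 2) (Fin 2) k) = Mk := hUk.unit_spec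
  have hmm : ((hUk.unit : GL (Fin 2) k) : Matrix (Fin 2) (Fin 2) k).map (algebraMap k K) = M := by
    rw [hcoe, hmap]
  have hMunit : IsUnit M := (Matrix.isUnit_iff_isUnit_det M).mpr (isUnit_iff_ne_zero.mpr hMdet)
  calc glAct hUk.unit (p i)
      = mulAct M hMunit (p i) := mulAct_congr hmm _ hMunit (p i)
    _ = q i := mulAct_eq_of_rep hMunit hc hcv


end CremonaPaper
end

section
/- Let k be a perfect field with algebraic closure k̄, let L ⊆ k̄ be a quadratic extension of k, and let g denote the nontrivial element of Gal(L/k). Equip ℙ¹(k̄) × ℙ¹(k̄) with the twisted Galois action in which h ∈ Gal(k̄/k) sends (x,y) to (x^h, y^h) if h restricts to the identity on L, and to (y^h, x^h) if h restricts to g on L. Let {P₁,P₂,P₃} and {Q₁,Q₂,Q₃} be subsets of ℙ¹(k̄) × ℙ¹(k̄), each a single orbit of size 3 for this twisted action, such that for every h ∈ Gal(k̄/k) there exists σ ∈ S₃ with P_i^h = P_{σ(i)} and Q_i^h = Q_{σ(i)} for i = 1,2,3. Assume moreover that the first coordinates of P₁,P₂,P₃ are pairwise distinct, their second coordinates are pairwise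 distinct, and the same holds for Q₁,Q₂,Q₃. Then there exists A ∈ PGL₂(L) such that the map (x,y) ↦ (A·x, A^g·y) sends P_i to Q_i for i = 1,2,3, where A^g denotes the image of A under the entrywise action of g on matrices. -/
open scoped LinearAlgebra.Projectivization

namespace CremonaPaper

variable {k K : Type} [Field k] [Field K] [Algebra k K]

/-- The twisted Galois action on `ℙ¹(K) × ℙ¹(K)` corresponding to the `k`-form `𝒬^L` of
`ℙ¹ × ℙ¹`: an automorphism `h` of `K/k` acts coordinatewise if it restricts to the identity
on `L`, and coordinatewise followed by the swap otherwise (i.e. when it restricts to the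
nontrivial element `g` of `Gal(L/k)`). -/
noncomputable def twAct (L : IntermediateField k K) (h : K ≃ₐ[k] K)
    (P : ℙ K (Fin 2 → K) × ℙ K (Fin 2 → K)) : ℙ K (Fin 2 → K) × ℙ K (Fin 2 → K) :=
  letI := Classical.propDecidable (∀ x ∈ L, h x = x)
  if (∀ x ∈ L, h x = x) then (galAct h P.1, galAct h P.2)
  else (galAct h P.2, galAct h P.1)

section ProjAux

open Projectivization

variable {F : Type} [Field F]

lemma mulVec_ne_zero' {n : ℕ} {M : Matrix (Fin n) (Fin n) F} (hM : IsUnit M)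
    {v : Fin n → F} (hv : v ≠ 0) : M.mulVec v ≠ 0 := by
  intro h
  apply hv
  have h1 : ((hM.unit⁻¹ : (Matrix (Fin n) (Fin n) F)ˣ) : Matrix (Fin n) (Fin n) F).mulVec
      (M.mulVec v) = 0 := by rw [h, Matrix.mulVec_zero]
  rw [Matrix.mulVec_mulVec] at h1
  have h2 := hM.unit.inv_mul
  rw [hM.unit_spec] at h2
  rwa [h2, Matrix.one_mulVec] at h1

lemma mulAct_mk {n : ℕ} (M : Matrix (Fin n) (Fin n) F) (hM : IsUnit M)
    (v : Fin n → F) (hv : v ≠ 0) :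
    mulAct M hM (Projectivization.mk F v hv)
      = Projectivization.mk F (M.mulVec v) (mulVec_ne_zero' hM hv) := by
  unfold mulAct
  obtain ⟨a, ha⟩ := Projectivization.exists_smul_eq_mk_rep F v hv
  rw [Projectivization.mk_eq_mk_iff]
  refine ⟨a, ?_⟩
  rw [← ha, Units.smul_def, Units.smul_def, Matrix.mulVec_smul]

lemma glActSelf_mk {n : ℕ} (M : GL (Fin n) F) (v : Fin n → F) (hv : v ≠ 0) :
    glActSelf M (Projectivization.mk F v hv)
      = Projectivization.mk F ((M : Matrix (Fin n) (Fin n) F).mulVec v)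
        (mulVec_ne_zero' (Units.isUnit M) hv) :=
  mulAct_mk _ _ v hv

lemma glActSelf_mul {n : ℕ} (M N : GL (Fin n) F) (x : ℙ F (Fin n → F)) :
    glActSelf (M * N) x = glActSelf M (glActSelf N x) := by
  conv_lhs => rw [← x.mk_rep]
  conv_rhs => rw [← x.mk_rep]
  rw [glActSelf_mk, glActSelf_mk, glActSelf_mk]
  rw [Projectivization.mk_eq_mk_iff']
  refine ⟨1, ?_⟩
  rw [one_smul, Matrix.mulVec_mulVec, Units.val_mul]

lemma glActSelf_one {n : ℕ} (x : ℙ F (Fin n → F)) : glActSelf (1 : GL (Fin n) F) x = x := by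
  conv_lhs => rw [← x.mk_rep]
  conv_rhs => rw [← x.mk_rep]
  rw [glActSelf_mk]
  rw [Projectivization.mk_eq_mk_iff']
  refine ⟨1, ?_⟩
  rw [one_smul, Units.val_one, Matrix.one_mulVec]

lemma glActSelf_inv_cancel {n : ℕ} (M : GL (Fin n) F) (x : ℙ F (Fin n → F)) :
    glActSelf M⁻¹ (glActSelf M x) = x := by
  rw [← glActSelf_mul, inv_mul_cancel, glActSelf_one]

lemma glActSelf_smul_eq (M N : GL (Fin 2) F) {c : F}
    (h : (M : Matrix (Fin 2) (Fin 2) F) = c • (N : Matrix (Fin 2) (Fin 2) F))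
    (x : ℙ F (Fin 2 → F)) : glActSelf M x = glActSelf N x := by
  conv_lhs => rw [← x.mk_rep]
  conv_rhs => rw [← x.mk_rep]
  rw [glActSelf_mk, glActSelf_mk, Projectivization.mk_eq_mk_iff']
  refine ⟨c, ?_⟩
  rw [← Matrix.smul_mulVec, ← h]

lemma funext_fin2 {α : Type} {v w : Fin 2 → α} (h0 : v 0 = w 0) (h1 : v 1 = w 1) : v = w := by
  funext i
  fin_cases i
  · exact h0
  · exact h1

/-- Non-proportionality of representatives, from distinctness of projective points. -/
lemma nonprop_of_ne {x y : ℙ F (Fin 2 → F)} (h : x ≠ y) (a : F) : x.rep ≠ a • y.rep := by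
  rintro he
  apply h
  conv_lhs => rw [← x.mk_rep]
  conv_rhs => rw [← y.mk_rep]
  rw [Projectivization.mk_eq_mk_iff']
  exact ⟨a, he.symm⟩

lemma det2_ne_zero {v w : Fin 2 → F} (hw : w ≠ 0)
    (h : ∀ a : F, v ≠ a • w) : v 0 * w 1 - v 1 * w 0 ≠ 0 := by
  intro hdet
  have hdet' : v 0 * w 1 = v 1 * w 0 := by linear_combination hdet
  by_cases hw0 : w 0 = 0
  · have hw1 : w 1 ≠ 0 := by
      intro hw1
      exact hw (funext_fin2 hw0 hw1)
    have hv0 : v 0 = 0 := by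
      have h2 := hdet'
      rw [hw0, mul_zero] at h2
      exact (mul_eq_zero.mp h2).resolve_right hw1
    apply h (v 1 / w 1)
    apply funext_fin2 <;> simp only [Pi.smul_apply, smul_eq_mul]
    · rw [hw0, hv0, mul_zero]
    · rw [div_mul_eq_mul_div, eq_div_iff hw1]
  · apply h (v 0 / w 0)
    apply funext_fin2 <;> simp only [Pi.smul_apply, smul_eq_mul]
    · rw [div_mul_eq_mul_div, eq_div_iff hw0]
    · rw [div_mul_eq_mul_div, eq_div_iff hw0]; linear_combination -hdet'

/-- Two-dimensional Cramer decomposition. -/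
lemma exists_coords {v w : Fin 2 → F} (hd : v 0 * w 1 - v 1 * w 0 ≠ 0) (x : Fin 2 → F) :
    ∃ α β : F, x = α • v + β • w := by
  refine ⟨(x 0 * w 1 - x 1 * w 0) / (v 0 * w 1 - v 1 * w 0),
    (v 0 * x 1 - v 1 * x 0) / (v 0 * w 1 - v 1 * w 0), ?_⟩
  apply funext_fin2 <;>
    simp only [Pi.add_apply, Pi.smul_apply, smul_eq_mul] <;>
    rw [div_mul_eq_mul_div, div_mul_eq_mul_div, ← add_div, eq_div_iff hd] <;> ring

lemma indep_of_nonprop {v w : Fin 2 → F} (hv : v ≠ 0)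
    (h : ∀ a : F, w ≠ a • v) {α β : F} (he : α • v + β • w = 0) : α = 0 ∧ β = 0 := by
  have hβ : β = 0 := by
    by_contra hβ
    apply h (-α / β)
    have h20 := congrFun he 0
    have h21 := congrFun he 1
    simp only [Pi.add_apply, Pi.smul_apply, smul_eq_mul, Pi.zero_apply] at h20 h21
    apply funext_fin2 <;> simp only [Pi.smul_apply, smul_eq_mul] <;>
      rw [div_mul_eq_mul_div, eq_div_iff hβ]
    · linear_combination h20
    · linear_combination h21
  refine ⟨?_, hβ⟩
  rw [hβ, zero_smul, add_zero] at he
  rcases smul_eq_zero.mp he with h' | h'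
  · exact h'
  · exact absurd h' hv

/-- The standard projective frame on `ℙ¹`. -/
noncomputable def stdTriple : Fin 3 → ℙ F (Fin 2 → F) :=
  ![Projectivization.mk F ![1, 0] (by intro h; simpa using congrFun h 0),
    Projectivization.mk F ![0, 1] (by intro h; simpa using congrFun h 1),
    Projectivization.mk F ![1, 1] (by intro h; simpa using congrFun h 0)]

lemma exists_glMap_std (p : Fin 3 → ℙ F (Fin 2 → F)) (hp : ∀ i j, i ≠ j → p i ≠ p j) :
    ∃ M : GL (Fin 2) F, ∀ i, glActSelf M (stdTriple i) = p i := by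
  have hd : (p 0).rep 0 * (p 1).rep 1 - (p 0).rep 1 * (p 1).rep 0 ≠ 0 :=
    det2_ne_zero (p 1).rep_nonzero (fun a => nonprop_of_ne (hp 0 1 (by decide)) a)
  obtain ⟨s, t, hst⟩ := exists_coords hd (p 2).rep
  have hs : s ≠ 0 := by
    rintro rfl
    rw [zero_smul, zero_add] at hst
    exact nonprop_of_ne (hp 2 1 (by decide)) t hst
  have ht : t ≠ 0 := by
    rintro rfl
    rw [zero_smul, add_zero] at hst
    exact nonprop_of_ne (hp 2 0 (by decide)) s hst
  have h0 := congrFun hst 0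
  have h1 := congrFun hst 1
  simp only [Pi.add_apply, Pi.smul_apply, smul_eq_mul] at h0 h1
  set M : Matrix (Fin 2) (Fin 2) F :=
    Matrix.of ![![s * (p 0).rep 0, t * (p 1).rep 0], ![s * (p 0).rep 1, t * (p 1).rep 1]]
    with hM
  have hdet : M.det ≠ 0 := by
    rw [Matrix.det_fin_two]
    have hM2 : M 0 0 * M 1 1 - M 0 1 * M 1 0
        = s * t * ((p 0).rep 0 * (p 1).rep 1 - (p 0).rep 1 * (p 1).rep 0) := by
      simp [hM]; ring
    rw [hM2]
    exact mul_ne_zero (mul_ne_zero hs ht) hd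
  refine ⟨Matrix.GeneralLinearGroup.mkOfDetNeZero M hdet, ?_⟩
  have hcoe : ((Matrix.GeneralLinearGroup.mkOfDetNeZero M hdet : GL (Fin 2) F) :
      Matrix (Fin 2) (Fin 2) F) = M := rfl
  intro i
  fin_cases i
  · show glActSelf _ (stdTriple 0) = p 0
    rw [show (stdTriple 0 : ℙ F (Fin 2 → F))
        = Projectivization.mk F ![1, 0] (by intro h; simpa using congrFun h 0) from rfl]
    conv_rhs => rw [← (p 0).mk_rep]
    rw [glActSelf_mk, Projectivization.mk_eq_mk_iff']
    refine ⟨s, ?_⟩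
    rw [hcoe]
    apply funext_fin2 <;>
      simp [hM, Matrix.mulVec, dotProduct, Fin.sum_univ_two]
  · show glActSelf _ (stdTriple 1) = p 1
    rw [show (stdTriple 1 : ℙ F (Fin 2 → F))
        = Projectivization.mk F ![0, 1] (by intro h; simpa using congrFun h 1) from rfl]
    conv_rhs => rw [← (p 1).mk_rep]
    rw [glActSelf_mk, Projectivization.mk_eq_mk_iff']
    refine ⟨t, ?_⟩
    rw [hcoe]
    apply funext_fin2 <;>
      simp [hM, Matrix.mulVec, dotProduct, Fin.sum_univ_two]
  · show glActSelf _ (stdTriple 2) = p 2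
    rw [show (stdTriple 2 : ℙ F (Fin 2 → F))
        = Projectivization.mk F ![1, 1] (by intro h; simpa using congrFun h 0) from rfl]
    conv_rhs => rw [← (p 2).mk_rep]
    rw [glActSelf_mk, Projectivization.mk_eq_mk_iff']
    refine ⟨1, ?_⟩
    rw [hcoe]
    apply funext_fin2 <;>
      simp [hM, Matrix.mulVec, dotProduct, Fin.sum_univ_two]
    · linear_combination h0
    · linear_combination h1

lemma exists_glMap (p q : Fin 3 → ℙ F (Fin 2 → F)) (hp : ∀ i j, i ≠ j → p i ≠ p j)
    (hq : ∀ i j, i ≠ j → q i ≠ q j) :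
    ∃ M : GL (Fin 2) F, ∀ i, glActSelf M (p i) = q i := by
  obtain ⟨Mp, hMp⟩ := exists_glMap_std p hp
  obtain ⟨Mq, hMq⟩ := exists_glMap_std q hq
  refine ⟨Mq * Mp⁻¹, fun i => ?_⟩
  rw [glActSelf_mul, ← hMp i, glActSelf_inv_cancel, hMq i]

lemma mulVec_inj (N : GL (Fin 2) F) {x y : Fin 2 → F}
    (h : (N : Matrix (Fin 2) (Fin 2) F).mulVec x = (N : Matrix (Fin 2) (Fin 2) F).mulVec y) :
    x = y := by
  have h2 := congrArg ((N⁻¹ : GL (Fin 2) F) : Matrix (Fin 2) (Fin 2) F).mulVec h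
  rwa [Matrix.mulVec_mulVec, Matrix.mulVec_mulVec, ← Units.val_mul, inv_mul_cancel,
    Units.val_one, Matrix.one_mulVec, Matrix.one_mulVec] at h2

lemma glMap_unique (p q : Fin 3 → ℙ F (Fin 2 → F)) (hp : ∀ i j, i ≠ j → p i ≠ p j)
    (M N : GL (Fin 2) F) (hM : ∀ i, glActSelf M (p i) = q i)
    (hN : ∀ i, glActSelf N (p i) = q i) :
    ∃ c : F, c ≠ 0 ∧ (M : Matrix (Fin 2) (Fin 2) F) = c • (N : Matrix (Fin 2) (Fin 2) F) := by
  set Mm := (M : Matrix (Fin 2) (Fin 2) F) with hMm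
  set Nm := (N : Matrix (Fin 2) (Fin 2) F) with hNm
  have key : ∀ i : Fin 3, ∃ a : F, a ≠ 0 ∧ Mm.mulVec ((p i).rep) = a • Nm.mulVec ((p i).rep) := by
    intro i
    have h1 : glActSelf M (p i) = glActSelf N (p i) := by rw [hM i, hN i]
    conv at h1 => rw [← (p i).mk_rep]
    rw [glActSelf_mk, glActSelf_mk, Projectivization.mk_eq_mk_iff'] at h1
    obtain ⟨a, ha⟩ := h1
    refine ⟨a, ?_, ha.symm⟩
    rintro rfl
    rw [zero_smul] at ha
    exact mulVec_ne_zero' (Units.isUnit M) (p i).rep_nonzero ha.symm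
  obtain ⟨a0, ha0, he0⟩ := key 0
  obtain ⟨a1, ha1, he1⟩ := key 1
  obtain ⟨a2, ha2, he2⟩ := key 2
  have hd : (p 0).rep 0 * (p 1).rep 1 - (p 0).rep 1 * (p 1).rep 0 ≠ 0 :=
    det2_ne_zero (p 1).rep_nonzero (fun a => nonprop_of_ne (hp 0 1 (by decide)) a)
  obtain ⟨s, t, hst⟩ := exists_coords hd ((p 2).rep)
  have hs : s ≠ 0 := by
    rintro rfl
    rw [zero_smul, zero_add] at hst
    exact nonprop_of_ne (hp 2 1 (by decide)) t hst
  have ht : t ≠ 0 := by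
    rintro rfl
    rw [zero_smul, add_zero] at hst
    exact nonprop_of_ne (hp 2 0 (by decide)) s hst
  have hNnonprop : ∀ a : F, Nm.mulVec ((p 1).rep) ≠ a • Nm.mulVec ((p 0).rep) := by
    intro a hcontra
    rw [← Matrix.mulVec_smul] at hcontra
    exact nonprop_of_ne (hp 1 0 (by decide)) a (mulVec_inj N hcontra)
  have hNv0 : Nm.mulVec ((p 0).rep) ≠ 0 := mulVec_ne_zero' (Units.isUnit N) (p 0).rep_nonzero
  have hcomb : (s * a0 - a2 * s) • Nm.mulVec ((p 0).rep)
      + (t * a1 - a2 * t) • Nm.mulVec ((p 1).rep) = 0 := by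
    have hA : Mm.mulVec ((p 2).rep)
        = (s * a0) • Nm.mulVec ((p 0).rep) + (t * a1) • Nm.mulVec ((p 1).rep) := by
      rw [hst, Matrix.mulVec_add, Matrix.mulVec_smul, Matrix.mulVec_smul, he0, he1]
      module
    have hB : Mm.mulVec ((p 2).rep)
        = (a2 * s) • Nm.mulVec ((p 0).rep) + (a2 * t) • Nm.mulVec ((p 1).rep) := by
      rw [he2, hst, Matrix.mulVec_add, Matrix.mulVec_smul, Matrix.mulVec_smul]
      module
    rw [hA] at hB
    linear_combination (norm := module) hB
  obtain ⟨hz0, hz1⟩ := indep_of_nonprop hNv0 hNnonprop hcomb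
  have ha02 : a0 = a2 := by
    have h4 : s * (a0 - a2) = 0 := by linear_combination hz0
    rcases mul_eq_zero.mp h4 with h | h
    · exact absurd h hs
    · exact sub_eq_zero.mp h
  have ha12 : a1 = a2 := by
    have h4 : t * (a1 - a2) = 0 := by linear_combination hz1
    rcases mul_eq_zero.mp h4 with h | h
    · exact absurd h ht
    · exact sub_eq_zero.mp h
  refine ⟨a0, ha0, ?_⟩
  have hkey : ∀ x : Fin 2 → F, Mm.mulVec x = a0 • Nm.mulVec x := by
    intro x
    obtain ⟨α, β, hx⟩ := exists_coords hd x
    rw [hx, Matrix.mulVec_add, Matrix.mulVec_add, Matrix.mulVec_smul, Matrix.mulVec_smul,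
      Matrix.mulVec_smul, Matrix.mulVec_smul, he0, he1, ha12, ← ha02]
    module
  ext i j
  have h2 := congrFun (hkey (Pi.single j 1)) i
  rw [Matrix.mulVec_single_one, Matrix.mulVec_single_one] at h2
  simpa [Matrix.transpose_apply, Matrix.smul_apply, Pi.smul_apply, smul_eq_mul] using h2

end ProjAux

section GalAux

open Projectivization

lemma galVec_ne_zero {n : ℕ} (h : K ≃ₐ[k] K) {v : Fin n → K} (hv : v ≠ 0) :
    (fun i => h (v i)) ≠ 0 := by
  intro hc
  apply hv
  funext i
  have hi : h (v i) = 0 := congrFun hc i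
  show v i = 0
  exact h.injective (by rw [map_zero]; exact hi)

lemma galAct_mk {n : ℕ} (h : K ≃ₐ[k] K) (v : Fin n → K) (hv : v ≠ 0) :
    galAct h (Projectivization.mk K v hv)
      = Projectivization.mk K (fun i => h (v i)) (galVec_ne_zero h hv) := by
  unfold galAct
  obtain ⟨a, ha⟩ := Projectivization.exists_smul_eq_mk_rep K v hv
  rw [Projectivization.mk_eq_mk_iff']
  refine ⟨h a, ?_⟩
  funext i
  have hi := congrFun ha i
  simp only [Pi.smul_apply, Units.smul_def, smul_eq_mul] at hi
  simp only [Pi.smul_apply, smul_eq_mul]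
  rw [← hi, map_mul]

/-- Entrywise application of a Galois automorphism to an invertible matrix. -/
noncomputable def matGal (h : K ≃ₐ[k] K) (M : GL (Fin 2) K) : GL (Fin 2) K :=
  Units.map (RingHom.toMonoidHom (RingHom.mapMatrix (h : K →+* K))) M

lemma matGal_apply (h : K ≃ₐ[k] K) (M : GL (Fin 2) K) (i j : Fin 2) :
    ((matGal h M : GL (Fin 2) K) : Matrix (Fin 2) (Fin 2) K) i j
      = h ((M : Matrix (Fin 2) (Fin 2) K) i j) := by
  simp [matGal, RingHom.mapMatrix_apply, Matrix.map_apply]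

lemma glActSelf_matGal (h : K ≃ₐ[k] K) (M : GL (Fin 2) K) (x : ℙ K (Fin 2 → K)) :
    glActSelf (matGal h M) (galAct h x) = galAct h (glActSelf M x) := by
  conv_lhs => rw [← x.mk_rep]
  conv_rhs => rw [← x.mk_rep]
  rw [galAct_mk, glActSelf_mk, glActSelf_mk, galAct_mk]
  congr 1
  funext i
  show (((matGal h M : GL (Fin 2) K) : Matrix (Fin 2) (Fin 2) K).mulVec
    (fun j => h (x.rep j))) i = h (((M : Matrix (Fin 2) (Fin 2) K).mulVec x.rep) i)
  simp only [Matrix.mulVec, dotProduct, map_sum, map_mul]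
  refine Finset.sum_congr rfl fun j _ => ?_
  rw [matGal_apply]

end GalAux


variable [PerfectField k] [IsAlgClosure k K]

section FixedAux

lemma mem_of_fixed (L : IntermediateField k K) (x : K)
    (hx : ∀ h : K ≃ₐ[k] K, (∀ y ∈ L, h y = y) → h x = x) : x ∈ L := by
  haveI : IsAlgClosed K := IsAlgClosure.isAlgClosed k
  haveI : Algebra.IsAlgebraic k K := IsAlgClosure.isAlgebraic
  haveI : Algebra.IsAlgebraic L K := Algebra.IsAlgebraic.tower_top (K := k) L
  haveI : IsAlgClosure L K := ⟨inferInstance, inferInstance⟩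
  haveI : Algebra.IsSeparable k K := inferInstance
  haveI : Algebra.IsSeparable L K := Algebra.isSeparable_tower_top_of_isSeparable k L K
  by_contra hxL
  have hint : IsIntegral L x := Algebra.IsIntegral.isIntegral x
  have hsep : (minpoly L x).Separable := Algebra.IsSeparable.isSeparable L x
  have hsp : ((minpoly L x).map (algebraMap L K)).Splits := IsAlgClosed.splits _
  have hcard : Fintype.card ((minpoly L x).rootSet K) = (minpoly L x).natDegree :=
    Polynomial.card_rootSet_eq_natDegree hsep hsp
  have hdeg : 1 < (minpoly L x).natDegree := by
    have hpos : 0 < (minpoly L x).natDegree := minpoly.natDegree_pos hint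
    rcases Nat.lt_or_ge 1 (minpoly L x).natDegree with h | h
    · exact h
    · exfalso
      have h1 : (minpoly L x).natDegree = 1 := le_antisymm h hpos
      obtain ⟨y, hy⟩ := minpoly.natDegree_eq_one_iff.mp h1
      exact hxL (hy ▸ y.2)
  have hxr : x ∈ (minpoly L x).rootSet K := by
    rw [Polynomial.mem_rootSet]
    exact ⟨minpoly.ne_zero hint, minpoly.aeval L x⟩
  obtain ⟨⟨y, hy⟩, hne⟩ := Fintype.exists_ne_of_one_lt_card (hcard ▸ hdeg)
    (⟨x, hxr⟩ : (minpoly L x).rootSet K)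
  have hyroot : Polynomial.aeval y (minpoly L x) = 0 := (Polynomial.mem_rootSet.mp hy).2
  obtain ⟨σ, hσ⟩ := minpoly.exists_algEquiv_of_root' (K := L) (L := K)
    hint.isAlgebraic hyroot
  have hfix : ∀ z ∈ L, (σ.restrictScalars k) z = z := by
    intro z hz
    exact σ.commutes ⟨z, hz⟩
  have hxx := hx (σ.restrictScalars k) hfix
  have : y = x := by
    rw [← hσ]
    exact hxx
  exact hne (Subtype.ext this)

end FixedAux



/-- Lemma 3.7.
Let `L ⊆ K` be a quadratic extension of the perfect field `k` and let `g ∈ Gal(K/k)` restrict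
to the nontrivial element of `Gal(L/k)`.  Let `{P₁,P₂,P₃}` and `{Q₁,Q₂,Q₃}` be two orbits of
size 3 of the twisted Galois action on `ℙ¹(K) × ℙ¹(K)` (i.e. two points of degree 3 of `𝒬^L`),
compatibly permuted by every `h ∈ Gal(K/k)`, whose geometric components lie on pairwise
distinct rulings.  Then there exists `A ∈ PGL₂(L)` such that `(x,y) ↦ (A·x, Aᵍ·y)` sends
`Pᵢ` to `Qᵢ` for `i = 1,2,3`. -/
theorem stmt3 (L : IntermediateField k K) (hL : Module.finrank k ↥L = 2)
    (g : K ≃ₐ[k] K) (hg : ¬ ∀ x ∈ L, g x = x)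
    (P Q : Fin 3 → ℙ K (Fin 2 → K) × ℙ K (Fin 2 → K))
    (hPinj : Function.Injective P) (hQinj : Function.Injective Q)
    (hPorb : Set.range P = {x | ∃ h : K ≃ₐ[k] K, x = twAct L h (P 0)})
    (hQorb : Set.range Q = {x | ∃ h : K ≃ₐ[k] K, x = twAct L h (Q 0)})
    (hcompat : ∀ h : K ≃ₐ[k] K, ∃ σ : Equiv.Perm (Fin 3),
      (∀ i, twAct L h (P i) = P (σ i)) ∧ (∀ i, twAct L h (Q i) = Q (σ i)))
    (hP1 : ∀ i j, i ≠ j → (P i).1 ≠ (P j).1) (hP2 : ∀ i j, i ≠ j → (P i).2 ≠ (P j).2)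
    (hQ1 : ∀ i j, i ≠ j → (Q i).1 ≠ (Q j).1) (hQ2 : ∀ i j, i ≠ j → (Q i).2 ≠ (Q j).2) :
    ∃ A : GL (Fin 2) K, (∀ i j, (A : Matrix (Fin 2) (Fin 2) K) i j ∈ L) ∧
      ∃ B : GL (Fin 2) K,
        (∀ i j, (B : Matrix (Fin 2) (Fin 2) K) i j = g ((A : Matrix (Fin 2) (Fin 2) K) i j)) ∧
        ∀ i, (glActSelf A (P i).1, glActSelf B (P i).2) = Q i := by
  classical
  obtain ⟨A₀, hA₀⟩ := exists_glMap (fun i => (P i).1) (fun i => (Q i).1) hP1 hQ1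
  have hex : ∃ i j, (A₀ : Matrix (Fin 2) (Fin 2) K) i j ≠ 0 := by
    by_contra hc
    push_neg at hc
    have h0 : (A₀ : Matrix (Fin 2) (Fin 2) K) = 0 := by
      ext i j; exact hc i j
    have hu := (Matrix.isUnit_iff_isUnit_det _).mp (Units.isUnit A₀)
    rw [h0] at hu
    simp [Matrix.det_fin_two] at hu
  obtain ⟨i₀, j₀, hij⟩ := hex
  have hdet : (((A₀ : Matrix (Fin 2) (Fin 2) K) i₀ j₀)⁻¹ •
      (A₀ : Matrix (Fin 2) (Fin 2) K)).det ≠ 0 := by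
    rw [Matrix.det_smul]
    have hd0 : (A₀ : Matrix (Fin 2) (Fin 2) K).det ≠ 0 := by
      have hu := (Matrix.isUnit_iff_isUnit_det _).mp (Units.isUnit A₀)
      exact hu.ne_zero
    exact mul_ne_zero (pow_ne_zero _ (inv_ne_zero hij)) hd0
  set A : GL (Fin 2) K := Matrix.GeneralLinearGroup.mkOfDetNeZero _ hdet with hA
  have hAcoe : (A : Matrix (Fin 2) (Fin 2) K)
      = ((A₀ : Matrix (Fin 2) (Fin 2) K) i₀ j₀)⁻¹ • (A₀ : Matrix (Fin 2) (Fin 2) K) := rfl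
  have hAact : ∀ i, glActSelf A (P i).1 = (Q i).1 := fun i =>
    (glActSelf_smul_eq A A₀ hAcoe _).trans (hA₀ i)
  have hAnorm : (A : Matrix (Fin 2) (Fin 2) K) i₀ j₀ = 1 := by
    rw [hAcoe]
    simp only [Matrix.smul_apply, smul_eq_mul]
    exact inv_mul_cancel₀ hij
  have hmem : ∀ i j, (A : Matrix (Fin 2) (Fin 2) K) i j ∈ L := by
    intro i j
    apply mem_of_fixed L
    intro h hfix
    obtain ⟨σ, hσP, hσQ⟩ := hcompat h
    have htwP : ∀ i, P (σ i) = (galAct h (P i).1, galAct h (P i).2) := by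
      intro i
      rw [← hσP i]
      simp only [twAct]
      rw [if_pos hfix]
    have htwQ : ∀ i, Q (σ i) = (galAct h (Q i).1, galAct h (Q i).2) := by
      intro i
      rw [← hσQ i]
      simp only [twAct]
      rw [if_pos hfix]
    have hact : ∀ jj, glActSelf (matGal h A) (P jj).1 = (Q jj).1 := by
      intro jj
      have h1 : (P jj).1 = galAct h (P (σ.symm jj)).1 := by
        have h3 := htwP (σ.symm jj)
        rw [Equiv.apply_symm_apply] at h3
        rw [h3]
      have h2 : (Q jj).1 = galAct h (Q (σ.symm jj)).1 := by
        have h3 := htwQ (σ.symm jj)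
        rw [Equiv.apply_symm_apply] at h3
        rw [h3]
      rw [h1, glActSelf_matGal, hAact (σ.symm jj), ← h2]
    obtain ⟨c, hc, hceq⟩ := glMap_unique (fun i => (P i).1) (fun i => (Q i).1) hP1
      (matGal h A) A hact hAact
    have hent := Matrix.ext_iff.mpr hceq
    have hc1 : c = 1 := by
      have h4 := hent i₀ j₀
      rw [matGal_apply, Matrix.smul_apply, smul_eq_mul, hAnorm] at h4
      simp only [map_one, mul_one] at h4
      exact h4.symm
    have h5 := hent i j
    rw [matGal_apply, Matrix.smul_apply, smul_eq_mul, hc1, one_mul] at h5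
    exact h5
  refine ⟨A, hmem, matGal g A, fun i j => matGal_apply g A i j, ?_⟩
  intro i
  obtain ⟨σ, hσP, hσQ⟩ := hcompat g
  have htwP : ∀ i, P (σ i) = (galAct g (P i).2, galAct g (P i).1) := by
    intro i
    rw [← hσP i]
    simp only [twAct]
    rw [if_neg hg]
  have htwQ : ∀ i, Q (σ i) = (galAct g (Q i).2, galAct g (Q i).1) := by
    intro i
    rw [← hσQ i]
    simp only [twAct]
    rw [if_neg hg]
  have hsec : glActSelf (matGal g A) (P i).2 = (Q i).2 := by
    have h1 : (P i).2 = galAct g (P (σ.symm i)).1 := by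
      have h3 := htwP (σ.symm i)
      rw [Equiv.apply_symm_apply] at h3
      rw [h3]
    have h2 : (Q i).2 = galAct g (Q (σ.symm i)).1 := by
      have h3 := htwQ (σ.symm i)
      rw [Equiv.apply_symm_apply] at h3
      rw [h3]
    rw [h1, glActSelf_matGal, hAact (σ.symm i), ← h2]
  exact Prod.ext (hAact i) hsec


end CremonaPaper
end

section
/- Let K be a field and let H ⊆ PGL₃(K) be the subgroup of classes of permutation matrices (isomorphic to S₃), acting on ℙ²(K) by permuting the three homogeneous coordinates. If the H-orbit O of a point [x:y:z] ∈ ℙ²(K) with x·y·z ≠ 0 has at most 5 elements, then O is one of the following: (1) O = {[1:1:1]}; (2) O = {[1:a:a²],[1:a²:a]} for some a ∈ K with a³ = 1; (3) O = {[1:a:a],[a:a:1],[a:1:a]} for some a ∈ K with a ≠ 0. -/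
open scoped LinearAlgebra.Projectivization

namespace CremonaPaper

variable {K : Type} [Field K]

/-- The action of a permutation of the three homogeneous coordinates on `ℙ²(K)`; these maps
are exactly the action of the subgroup `H ⊆ PGL₃(K)` of classes of permutation matrices. -/
noncomputable def permAct (σ : Equiv.Perm (Fin 3)) (P : ℙ K (Fin 3 → K)) :
    ℙ K (Fin 3 → K) :=
  Projectivization.mk K (fun i => P.rep (σ i)) (by
    intro h
    apply P.rep_nonzero
    funext i
    have hi : P.rep (σ (σ.symm i)) = 0 := congrFun h (σ.symm i)
    rw [Equiv.apply_symm_apply] at hi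
    exact hi)

/-- The point `[x:y:z]` of `ℙ²(K)`. -/
noncomputable def pt3 (x y z : K) (h : ¬(x = 0 ∧ y = 0 ∧ z = 0)) : ℙ K (Fin 3 → K) :=
  Projectivization.mk K ![x, y, z] (by
    intro hc
    apply h
    refine ⟨?_, ?_, ?_⟩
    · simpa using congrFun hc 0
    · simpa using congrFun hc 1
    · simpa using congrFun hc 2)

lemma pt3_eq_iff {x y z x' y' z' : K} {h : ¬(x = 0 ∧ y = 0 ∧ z = 0)}
    {h' : ¬(x' = 0 ∧ y' = 0 ∧ z' = 0)} :
    pt3 x y z h = pt3 x' y' z' h' ↔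
      ∃ c : K, c ≠ 0 ∧ x = c * x' ∧ y = c * y' ∧ z = c * z' := by
  unfold pt3
  rw [Projectivization.mk_eq_mk_iff]
  constructor
  · rintro ⟨a, ha⟩
    refine ⟨a, a.ne_zero, ?_, ?_, ?_⟩
    · simpa [Units.smul_def] using (congrFun ha 0).symm
    · simpa [Units.smul_def] using (congrFun ha 1).symm
    · simpa [Units.smul_def] using (congrFun ha 2).symm
  · rintro ⟨c, hc, h1, h2, h3⟩
    refine ⟨Units.mk0 c hc, ?_⟩
    funext i
    fin_cases i <;> simp [Units.smul_def, h1.symm, h2.symm, h3.symm]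

lemma perm6 (σ : Equiv.Perm (Fin 3)) :
    σ = 1 ∨ σ = Equiv.swap 0 1 ∨ σ = Equiv.swap 0 2 ∨ σ = Equiv.swap 1 2 ∨
    σ = finRotate 3 ∨ σ = (finRotate 3)⁻¹ := by revert σ; decide

lemma permAct_pt3' (P : ℙ K (Fin 3 → K)) (hP : ∀ i, P.rep i ≠ 0) (σ : Equiv.Perm (Fin 3)) :
    permAct σ P = pt3 (P.rep (σ 0)) (P.rep (σ 1)) (P.rep (σ 2)) (fun hc => hP (σ 0) hc.1) := by
  unfold permAct pt3
  rw [Projectivization.mk_eq_mk_iff]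
  refine ⟨1, ?_⟩
  funext i
  fin_cases i <;> simp

/-- Lemma 6.14.
Let `H ⊆ PGL₃(K)` be the subgroup of classes of permutation matrices, acting on `ℙ²(K)` by
permuting the homogeneous coordinates.  If the `H`-orbit `O` of a point `[x:y:z]` with
`xyz ≠ 0` has at most `5` elements, then `O = {[1:1:1]}`, or `O = {[1:a:a²],[1:a²:a]}` for
some `a` with `a³ = 1`, or `O = {[1:a:a],[a:a:1],[a:1:a]}` for some `a ≠ 0`. -/
theorem stmt4 (P : ℙ K (Fin 3 → K)) (hP : ∀ i, P.rep i ≠ 0)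
    (O : Set (ℙ K (Fin 3 → K)))
    (hO : O = {Q | ∃ σ : Equiv.Perm (Fin 3), Q = permAct σ P})
    (hcard : O.ncard ≤ 5) :
    O = {pt3 1 1 1 (by simp)} ∨
    (∃ a : K, a ^ 3 = 1 ∧
      O = {pt3 1 a (a ^ 2) (by simp), pt3 1 (a ^ 2) a (by simp)}) ∨
    (∃ a : K, a ≠ 0 ∧
      O = {pt3 1 a a (by simp), pt3 a a 1 (by simp), pt3 a 1 a (by simp)}) := by
  classical
  obtain ⟨x, hxd⟩ : ∃ t, P.rep 0 = t := ⟨_, rfl⟩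
  obtain ⟨y, hyd⟩ : ∃ t, P.rep 1 = t := ⟨_, rfl⟩
  obtain ⟨z, hzd⟩ : ∃ t, P.rep 2 = t := ⟨_, rfl⟩
  have hx : x ≠ 0 := hxd ▸ hP 0
  have hy : y ≠ 0 := hyd ▸ hP 1
  have hz : z ≠ 0 := hzd ▸ hP 2
  have nzx : ∀ u v : K, ¬(x = 0 ∧ u = 0 ∧ v = 0) := fun u v hc => hx hc.1
  have nzy : ∀ u v : K, ¬(y = 0 ∧ u = 0 ∧ v = 0) := fun u v hc => hy hc.1
  have nzz : ∀ u v : K, ¬(z = 0 ∧ u = 0 ∧ v = 0) := fun u v hc => hz hc.1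
  have e01 : (Equiv.swap (0 : Fin 3) 1) 0 = 1 := by decide
  have e01' : (Equiv.swap (0 : Fin 3) 1) 1 = 0 := by decide
  have e01'' : (Equiv.swap (0 : Fin 3) 1) 2 = 2 := by decide
  have e02 : (Equiv.swap (0 : Fin 3) 2) 0 = 2 := by decide
  have e02' : (Equiv.swap (0 : Fin 3) 2) 1 = 1 := by decide
  have e02'' : (Equiv.swap (0 : Fin 3) 2) 2 = 0 := by decide
  have e12 : (Equiv.swap (1 : Fin 3) 2) 0 = 0 := by decide
  have e12' : (Equiv.swap (1 : Fin 3) 2) 1 = 2 := by decide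
  have e12'' : (Equiv.swap (1 : Fin 3) 2) 2 = 1 := by decide
  have er : (finRotate 3) 0 = 1 := by decide
  have er' : (finRotate 3) 1 = 2 := by decide
  have er'' : (finRotate 3) 2 = 0 := by decide
  have ei : ((finRotate 3)⁻¹ : Equiv.Perm (Fin 3)) 0 = 2 := by decide
  have ei' : ((finRotate 3)⁻¹ : Equiv.Perm (Fin 3)) 1 = 0 := by decide
  have ei'' : ((finRotate 3)⁻¹ : Equiv.Perm (Fin 3)) 2 = 1 := by decide
  have eid : ((1 : Equiv.Perm (Fin 3)) 0 = 0) := rfl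
  have eid' : ((1 : Equiv.Perm (Fin 3)) 1 = 1) := rfl
  have eid'' : ((1 : Equiv.Perm (Fin 3)) 2 = 2) := rfl
  have trans3 : ∀ {u v w u' v' w' : K} {h : ¬(u = 0 ∧ v = 0 ∧ w = 0)}
      {h' : ¬(u' = 0 ∧ v' = 0 ∧ w' = 0)}, u = u' → v = v' → w = w' →
      pt3 u v w h = pt3 u' v' w' h' := by
    intro u v w u' v' w' h h' h1 h2 h3
    exact pt3_eq_iff.mpr ⟨1, one_ne_zero, by simp [h1, h2, h3]⟩
  have hO6 : O = {pt3 x y z (nzx y z), pt3 y x z (nzy x z), pt3 z y x (nzz y x),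
      pt3 x z y (nzx z y), pt3 y z x (nzy z x), pt3 z x y (nzz x y)} := by
    rw [hO]; ext Q
    simp only [Set.mem_setOf_eq, Set.mem_insert_iff, Set.mem_singleton_iff]
    constructor
    · rintro ⟨σ, rfl⟩
      rcases perm6 σ with rfl | rfl | rfl | rfl | rfl | rfl
      · exact Or.inl (by rw [permAct_pt3' P hP]; exact trans3 (by rw [eid, hxd]) (by rw [eid', hyd]) (by rw [eid'', hzd]))
      · exact Or.inr (Or.inl (by rw [permAct_pt3' P hP]; exact trans3 (by rw [e01, hyd]) (by rw [e01', hxd]) (by rw [e01'', hzd])))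
      · exact Or.inr (Or.inr (Or.inl (by rw [permAct_pt3' P hP]; exact trans3 (by rw [e02, hzd]) (by rw [e02', hyd]) (by rw [e02'', hxd]))))
      · exact Or.inr (Or.inr (Or.inr (Or.inl (by rw [permAct_pt3' P hP]; exact trans3 (by rw [e12, hxd]) (by rw [e12', hzd]) (by rw [e12'', hyd])))))
      · exact Or.inr (Or.inr (Or.inr (Or.inr (Or.inl (by rw [permAct_pt3' P hP]; exact trans3 (by rw [er, hyd]) (by rw [er', hzd]) (by rw [er'', hxd]))))))
      · exact Or.inr (Or.inr (Or.inr (Or.inr (Or.inr (by rw [permAct_pt3' P hP]; exact trans3 (by rw [ei, hzd]) (by rw [ei', hxd]) (by rw [ei'', hyd]))))))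
    · rintro (rfl | rfl | rfl | rfl | rfl | rfl)
      · exact ⟨1, by rw [permAct_pt3' P hP]; exact trans3 (by rw [eid, hxd]) (by rw [eid', hyd]) (by rw [eid'', hzd]) |>.symm⟩
      · exact ⟨Equiv.swap 0 1, by rw [permAct_pt3' P hP]; exact trans3 (by rw [e01, hyd]) (by rw [e01', hxd]) (by rw [e01'', hzd]) |>.symm⟩
      · exact ⟨Equiv.swap 0 2, by rw [permAct_pt3' P hP]; exact trans3 (by rw [e02, hzd]) (by rw [e02', hyd]) (by rw [e02'', hxd]) |>.symm⟩
      · exact ⟨Equiv.swap 1 2, by rw [permAct_pt3' P hP]; exact trans3 (by rw [e12, hxd]) (by rw [e12', hzd]) (by rw [e12'', hyd]) |>.symm⟩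
      · exact ⟨finRotate 3, by rw [permAct_pt3' P hP]; exact trans3 (by rw [er, hyd]) (by rw [er', hzd]) (by rw [er'', hxd]) |>.symm⟩
      · exact ⟨(finRotate 3)⁻¹, by rw [permAct_pt3' P hP]; exact trans3 (by rw [ei, hzd]) (by rw [ei', hxd]) (by rw [ei'', hyd]) |>.symm⟩
  clear hO
  have cancel1 : ∀ {c u : K}, u ≠ 0 → u = c * u → c = 1 := fun {c u} hu h =>
    mul_right_cancel₀ hu (by rw [one_mul]; exact h.symm)
  by_cases hyz : y = z
  · subst hyz
    refine Or.inr (Or.inr ⟨y * x⁻¹, mul_ne_zero hy (inv_ne_zero hx), ?_⟩)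
    rw [hO6]; ext Q
    simp only [Set.mem_insert_iff, Set.mem_singleton_iff]
    constructor
    · rintro (rfl | rfl | rfl | rfl | rfl | rfl)
      · exact Or.inl (pt3_eq_iff.mpr ⟨x, hx, by field_simp, by field_simp, by field_simp⟩)
      · exact Or.inr (Or.inr (pt3_eq_iff.mpr ⟨x, hx, by field_simp, by field_simp, by field_simp⟩))
      · exact Or.inr (Or.inl (pt3_eq_iff.mpr ⟨x, hx, by field_simp, by field_simp, by field_simp⟩))
      · exact Or.inl (pt3_eq_iff.mpr ⟨x, hx, by field_simp, by field_simp, by field_simp⟩)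
      · exact Or.inr (Or.inl (pt3_eq_iff.mpr ⟨x, hx, by field_simp, by field_simp, by field_simp⟩))
      · exact Or.inr (Or.inr (pt3_eq_iff.mpr ⟨x, hx, by field_simp, by field_simp, by field_simp⟩))
    · rintro (rfl | rfl | rfl)
      · exact Or.inl ((pt3_eq_iff.mpr ⟨x, hx, by field_simp, by field_simp, by field_simp⟩).symm)
      · exact Or.inr (Or.inr (Or.inl ((pt3_eq_iff.mpr ⟨x, hx, by field_simp, by field_simp, by field_simp⟩).symm)))
      · exact Or.inr (Or.inl ((pt3_eq_iff.mpr ⟨x, hx, by field_simp, by field_simp, by field_simp⟩).symm))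
  by_cases hxy : x = y
  · subst hxy
    refine Or.inr (Or.inr ⟨x * z⁻¹, mul_ne_zero hx (inv_ne_zero hz), ?_⟩)
    rw [hO6]; ext Q
    simp only [Set.mem_insert_iff, Set.mem_singleton_iff]
    constructor
    · rintro (rfl | rfl | rfl | rfl | rfl | rfl)
      · exact Or.inr (Or.inl (pt3_eq_iff.mpr ⟨z, hz, by field_simp, by field_simp, by field_simp⟩))
      · exact Or.inr (Or.inl (pt3_eq_iff.mpr ⟨z, hz, by field_simp, by field_simp, by field_simp⟩))
      · exact Or.inl (pt3_eq_iff.mpr ⟨z, hz, by field_simp, by field_simp, by field_simp⟩)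
      · exact Or.inr (Or.inr (pt3_eq_iff.mpr ⟨z, hz, by field_simp, by field_simp, by field_simp⟩))
      · exact Or.inr (Or.inr (pt3_eq_iff.mpr ⟨z, hz, by field_simp, by field_simp, by field_simp⟩))
      · exact Or.inl (pt3_eq_iff.mpr ⟨z, hz, by field_simp, by field_simp, by field_simp⟩)
    · rintro (rfl | rfl | rfl)
      · exact Or.inr (Or.inr (Or.inl ((pt3_eq_iff.mpr ⟨z, hz, by field_simp, by field_simp, by field_simp⟩).symm)))
      · exact Or.inl ((pt3_eq_iff.mpr ⟨z, hz, by field_simp, by field_simp, by field_simp⟩).symm)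
      · exact Or.inr (Or.inr (Or.inr (Or.inl ((pt3_eq_iff.mpr ⟨z, hz, by field_simp, by field_simp, by field_simp⟩).symm))))
  by_cases hxz : x = z
  · subst hxz
    refine Or.inr (Or.inr ⟨x * y⁻¹, mul_ne_zero hx (inv_ne_zero hy), ?_⟩)
    rw [hO6]; ext Q
    simp only [Set.mem_insert_iff, Set.mem_singleton_iff]
    constructor
    · rintro (rfl | rfl | rfl | rfl | rfl | rfl)
      · exact Or.inr (Or.inr (pt3_eq_iff.mpr ⟨y, hy, by field_simp, by field_simp, by field_simp⟩))
      · exact Or.inl (pt3_eq_iff.mpr ⟨y, hy, by field_simp, by field_simp, by field_simp⟩)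
      · exact Or.inr (Or.inr (pt3_eq_iff.mpr ⟨y, hy, by field_simp, by field_simp, by field_simp⟩))
      · exact Or.inr (Or.inl (pt3_eq_iff.mpr ⟨y, hy, by field_simp, by field_simp, by field_simp⟩))
      · exact Or.inl (pt3_eq_iff.mpr ⟨y, hy, by field_simp, by field_simp, by field_simp⟩)
      · exact Or.inr (Or.inl (pt3_eq_iff.mpr ⟨y, hy, by field_simp, by field_simp, by field_simp⟩))
    · rintro (rfl | rfl | rfl)
      · exact Or.inr (Or.inl ((pt3_eq_iff.mpr ⟨y, hy, by field_simp, by field_simp, by field_simp⟩).symm))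
      · exact Or.inr (Or.inr (Or.inr (Or.inl ((pt3_eq_iff.mpr ⟨y, hy, by field_simp, by field_simp, by field_simp⟩).symm))))
      · exact Or.inl ((pt3_eq_iff.mpr ⟨y, hy, by field_simp, by field_simp, by field_simp⟩).symm)
  by_cases hcyc : ∃ c : K, c ≠ 0 ∧ x = c * y ∧ y = c * z ∧ z = c * x
  · obtain ⟨c, hc, ec1, ec2, ec3⟩ := hcyc
    have hxx : x = c ^ 3 * x := by linear_combination ec1 + c * ec2 + c ^ 2 * ec3
    have hc3 : c ^ 3 = 1 := mul_right_cancel₀ hx (by rw [one_mul]; exact hxx.symm)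
    have hy' : y = c ^ 2 * x := by linear_combination ec2 + c * ec3
    have hz' : z = c * x := ec3
    have hc2 : x * c ^ 2 ≠ 0 := mul_ne_zero hx (pow_ne_zero 2 hc)
    have hc1 : x * c ≠ 0 := mul_ne_zero hx hc
    refine Or.inr (Or.inl ⟨c, hc3, ?_⟩)
    rw [hO6]; ext Q
    simp only [Set.mem_insert_iff, Set.mem_singleton_iff]
    constructor
    · rintro (rfl | rfl | rfl | rfl | rfl | rfl)
      · exact Or.inr (pt3_eq_iff.mpr ⟨x, hx, by ring, by linear_combination hy', by linear_combination hz'⟩)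
      · exact Or.inl (pt3_eq_iff.mpr ⟨x * c ^ 2, hc2, by linear_combination hy', by linear_combination (-x) * hc3, by linear_combination hz' - (x * c) * hc3⟩)
      · exact Or.inl (pt3_eq_iff.mpr ⟨x * c, hc1, by linear_combination hz', by linear_combination hy', by linear_combination (-x) * hc3⟩)
      · exact Or.inl (pt3_eq_iff.mpr ⟨x, hx, by ring, by linear_combination hz', by linear_combination hy'⟩)
      · exact Or.inr (pt3_eq_iff.mpr ⟨x * c ^ 2, hc2, by linear_combination hy', by linear_combination hz' - (x * c) * hc3, by linear_combination (-x) * hc3⟩)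
      · exact Or.inr (pt3_eq_iff.mpr ⟨x * c, hc1, by linear_combination hz', by linear_combination (-x) * hc3, by linear_combination hy'⟩)
    · rintro (rfl | rfl)
      · exact Or.inr (Or.inr (Or.inr (Or.inl ((pt3_eq_iff.mpr ⟨x, hx, by ring, by linear_combination hz', by linear_combination hy'⟩).symm))))
      · exact Or.inl ((pt3_eq_iff.mpr ⟨x, hx, by ring, by linear_combination hy', by linear_combination hz'⟩).symm)
  · exfalso
    have d12 : pt3 x y z (nzx y z) ≠ pt3 y x z (nzy x z) := by
      intro h; obtain ⟨c, hc, e1, e2, e3⟩ := pt3_eq_iff.mp h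
      rw [cancel1 hz e3, one_mul] at e1; exact hxy e1
    have d13 : pt3 x y z (nzx y z) ≠ pt3 z y x (nzz y x) := by
      intro h; obtain ⟨c, hc, e1, e2, e3⟩ := pt3_eq_iff.mp h
      rw [cancel1 hy e2, one_mul] at e1; exact hxz e1
    have d14 : pt3 x y z (nzx y z) ≠ pt3 x z y (nzx z y) := by
      intro h; obtain ⟨c, hc, e1, e2, e3⟩ := pt3_eq_iff.mp h
      rw [cancel1 hx e1, one_mul] at e2; exact hyz e2
    have d15 : pt3 x y z (nzx y z) ≠ pt3 y z x (nzy z x) := by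
      intro h; obtain ⟨c, hc, e1, e2, e3⟩ := pt3_eq_iff.mp h
      exact hcyc ⟨c, hc, e1, e2, e3⟩
    have d16 : pt3 x y z (nzx y z) ≠ pt3 z x y (nzz x y) := by
      intro h; obtain ⟨c, hc, e1, e2, e3⟩ := pt3_eq_iff.mp h
      exact hcyc ⟨c ^ 2, pow_ne_zero 2 hc, by linear_combination e1 + c * e3,
        by linear_combination e2 + c * e1, by linear_combination e3 + c * e2⟩
    have d23 : pt3 y x z (nzy x z) ≠ pt3 z y x (nzz y x) := by
      intro h; obtain ⟨c, hc, e1, e2, e3⟩ := pt3_eq_iff.mp h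
      exact hcyc ⟨c, hc, e2, e1, e3⟩
    have d24 : pt3 y x z (nzy x z) ≠ pt3 x z y (nzx z y) := by
      intro h; obtain ⟨c, hc, e1, e2, e3⟩ := pt3_eq_iff.mp h
      exact hcyc ⟨c ^ 2, pow_ne_zero 2 hc, by linear_combination e2 + c * e3,
        by linear_combination e1 + c * e2, by linear_combination e3 + c * e1⟩
    have d25 : pt3 y x z (nzy x z) ≠ pt3 y z x (nzy z x) := by
      intro h; obtain ⟨c, hc, e1, e2, e3⟩ := pt3_eq_iff.mp h
      rw [cancel1 hy e1, one_mul] at e2; exact hxz e2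
    have d26 : pt3 y x z (nzy x z) ≠ pt3 z x y (nzz x y) := by
      intro h; obtain ⟨c, hc, e1, e2, e3⟩ := pt3_eq_iff.mp h
      rw [cancel1 hx e2, one_mul] at e1; exact hyz e1
    have d34 : pt3 z y x (nzz y x) ≠ pt3 x z y (nzx z y) := by
      intro h; obtain ⟨c, hc, e1, e2, e3⟩ := pt3_eq_iff.mp h
      exact hcyc ⟨c, hc, e3, e2, e1⟩
    have d35 : pt3 z y x (nzz y x) ≠ pt3 y z x (nzy z x) := by
      intro h; obtain ⟨c, hc, e1, e2, e3⟩ := pt3_eq_iff.mp h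
      rw [cancel1 hx e3, one_mul] at e2; exact hyz e2
    have d36 : pt3 z y x (nzz y x) ≠ pt3 z x y (nzz x y) := by
      intro h; obtain ⟨c, hc, e1, e2, e3⟩ := pt3_eq_iff.mp h
      rw [cancel1 hz e1, one_mul] at e2; exact hxy e2.symm
    have d45 : pt3 x z y (nzx z y) ≠ pt3 y z x (nzy z x) := by
      intro h; obtain ⟨c, hc, e1, e2, e3⟩ := pt3_eq_iff.mp h
      rw [cancel1 hz e2, one_mul] at e1; exact hxy e1
    have d46 : pt3 x z y (nzx z y) ≠ pt3 z x y (nzz x y) := by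
      intro h; obtain ⟨c, hc, e1, e2, e3⟩ := pt3_eq_iff.mp h
      rw [cancel1 hy e3, one_mul] at e1; exact hxz e1
    have d56 : pt3 y z x (nzy z x) ≠ pt3 z x y (nzz x y) := by
      intro h; obtain ⟨c, hc, e1, e2, e3⟩ := pt3_eq_iff.mp h
      exact hcyc ⟨c, hc, e3, e1, e2⟩
    rw [hO6] at hcard
    rw [Set.ncard_insert_of_notMem (by simp [d12, d13, d14, d15, d16]) (Set.toFinite _),
        Set.ncard_insert_of_notMem (by simp [d23, d24, d25, d26]) (Set.toFinite _),
        Set.ncard_insert_of_notMem (by simp [d34, d35, d36]) (Set.toFinite _),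
        Set.ncard_insert_of_notMem (by simp [d45, d46]) (Set.toFinite _),
        Set.ncard_pair d56] at hcard
    omega


end CremonaPaper
end

section
/- Let k be a perfect field with algebraic closure k̄. There is no nonempty subset S ⊆ ℙ²(k̄) with at most 8 elements, no three of whose points are collinear, that is stable under both the coordinatewise action of Gal(k̄/k) and the action of PGL₃(k). Equivalently, PGL₃(k) = Aut_k(ℙ²) has no orbit in ℙ² with between 1 and 8 geometric components in general position. -/
open scoped LinearAlgebra.Projectivization

namespace CremonaPaper

variable {k K : Type} [Field k] [Field K] [Algebra k K]

/-! ### Auxiliary lemmas -/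

lemma sq_zero (t : k) (i j : Fin 3) (hij : j ≠ i) :
    (t • Matrix.single i j 1) * (t • Matrix.single i j (1:k)) = 0 := by
  rw [smul_mul_assoc, Matrix.mul_smul, Matrix.single_mul_single_of_ne (i := i) (j := j) (k := i) (h := hij)]
  simp

/-- The transvection `1 + t E_{ij}` as an element of `GL₃(k)`. -/
def transvect (t : k) (i j : Fin 3) (hij : j ≠ i) : GL (Fin 3) k where
  val := 1 + t • Matrix.single i j 1
  inv := 1 - t • Matrix.single i j 1
  val_inv := by
    rw [add_mul, one_mul, mul_sub, mul_one, sq_zero t i j hij, sub_zero]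
    abel
  inv_val := by
    rw [sub_mul, one_mul, mul_add, mul_one, sq_zero t i j hij, add_zero]
    abel

lemma mulVec_transvect (t : K) (i j : Fin 3) (hij : j ≠ i) (w : Fin 3 → K) :
    ((1 : Matrix (Fin 3) (Fin 3) K) + t • Matrix.single i j 1).mulVec w
      = w + (t * w j) • (Pi.single i 1 : Fin 3 → K) := by
  fin_cases i <;> fin_cases j <;> (try exact absurd (by decide) hij) <;>
    (funext m; fin_cases m <;>
      simp [Matrix.mulVec, dotProduct, Fin.sum_univ_three, Matrix.one_apply,
        Matrix.single, Pi.single_apply] <;> ring)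

lemma map_transvect (t : k) (i j : Fin 3) :
    ((1 + t • Matrix.single i j 1 : Matrix (Fin 3) (Fin 3) k).map (algebraMap k K))
      = 1 + (algebraMap k K t) • Matrix.single i j 1 := by
  funext a b
  simp [Matrix.map_apply, Matrix.one_apply, Matrix.single, Pi.single_apply,
    apply_ite (algebraMap k K), Algebra.algebraMap_eq_smul_one, ite_smul, add_smul]

lemma glAct_transvect (t : k) (i j : Fin 3) (hij : j ≠ i) (P : ℙ K (Fin 3 → K))
    (w : Fin 3 → K) (hw0 : w ≠ 0)
    (hw : w = P.rep + (algebraMap k K t * P.rep j) • (Pi.single i 1 : Fin 3 → K)) :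
    glAct (transvect t i j hij) P = Projectivization.mk K w hw0 := by
  have hv : (((transvect t i j hij : GL (Fin 3) k) : Matrix (Fin 3) (Fin 3) k).map
      (algebraMap k K)).mulVec P.rep = w := by
    show ((1 + t • Matrix.single i j 1 : Matrix (Fin 3) (Fin 3) k).map
      (algebraMap k K)).mulVec P.rep = w
    rw [map_transvect, mulVec_transvect _ i j hij, hw]
  unfold glAct mulAct
  rw [Projectivization.mk_eq_mk_iff]
  exact ⟨1, by rw [one_smul, ← hv]⟩

lemma glAct_mk (t : k) (i j : Fin 3) (hij : j ≠ i) (w : Fin 3 → K) (hw0 : w ≠ 0)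
    (w' : Fin 3 → K) (hw0' : w' ≠ 0)
    (hw' : w' = w + (algebraMap k K t * w j) • (Pi.single i 1 : Fin 3 → K)) :
    glAct (transvect t i j hij) (Projectivization.mk K w hw0)
      = Projectivization.mk K w' hw0' := by
  obtain ⟨a, ha⟩ := Projectivization.exists_smul_eq_mk_rep K w hw0
  have h1 : (a:K) • w' = (Projectivization.mk K w hw0).rep
      + (algebraMap k K t * (Projectivization.mk K w hw0).rep j)
        • (Pi.single i 1 : Fin 3 → K) := by
    rw [hw', ← ha]
    funext m
    simp only [Units.smul_def, Pi.smul_apply, Pi.add_apply, smul_eq_mul]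
    ring
  have h2 : (a:K) • w' ≠ 0 := smul_ne_zero (Units.ne_zero a) hw0'
  rw [glAct_transvect t i j hij _ _ h2 h1]
  rw [Projectivization.mk_eq_mk_iff]
  exact ⟨a, rfl⟩

lemma key (S : Set (ℙ K (Fin 3 → K)))
    (hGP : ∀ u ∈ S, ∀ v ∈ S, ∀ w ∈ S, u ≠ v → u ≠ w → v ≠ w →
      LinearIndependent K ![Projectivization.rep u, Projectivization.rep v,
        Projectivization.rep w])
    (V : Fin 3 → (Fin 3 → K)) (hV : ∀ m, V m ≠ 0)
    (hmem : ∀ m, Projectivization.mk K (V m) (hV m) ∈ S)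
    (h01 : Projectivization.mk K (V 0) (hV 0) ≠ Projectivization.mk K (V 1) (hV 1))
    (h02 : Projectivization.mk K (V 0) (hV 0) ≠ Projectivization.mk K (V 2) (hV 2))
    (h12 : Projectivization.mk K (V 1) (hV 1) ≠ Projectivization.mk K (V 2) (hV 2))
    (g : Fin 3 → K) (hg : g 0 • V 0 + g 1 • V 1 + g 2 • V 2 = 0)
    (m₀ : Fin 3) (hgm : g m₀ ≠ 0) : False := by
  obtain ⟨a0, ha0⟩ := Projectivization.exists_smul_eq_mk_rep K (V 0) (hV 0)
  obtain ⟨a1, ha1⟩ := Projectivization.exists_smul_eq_mk_rep K (V 1) (hV 1)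
  obtain ⟨a2, ha2⟩ := Projectivization.exists_smul_eq_mk_rep K (V 2) (hV 2)
  have hLI := hGP _ (hmem 0) _ (hmem 1) _ (hmem 2) h01 h02 h12
  rw [Fintype.linearIndependent_iff] at hLI
  have hall := hLI ![g 0 * (a0:K)⁻¹, g 1 * (a1:K)⁻¹, g 2 * (a2:K)⁻¹] ?_
  · have e0 : g 0 = 0 := by
      have h := hall 0
      simp only [Matrix.cons_val_zero] at h
      exact (mul_eq_zero.mp h).resolve_right (inv_ne_zero (Units.ne_zero a0))
    have e1 : g 1 = 0 := by
      have h := hall 1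
      simp only [Matrix.cons_val_one, Matrix.head_cons] at h
      exact (mul_eq_zero.mp h).resolve_right (inv_ne_zero (Units.ne_zero a1))
    have e2 : g 2 = 0 := by
      have h := hall 2
      simp only [Matrix.cons_val_two, Matrix.tail_cons, Matrix.head_cons] at h
      exact (mul_eq_zero.mp h).resolve_right (inv_ne_zero (Units.ne_zero a2))
    fin_cases m₀
    · exact hgm e0
    · exact hgm e1
    · exact hgm e2
  · rw [Fin.sum_univ_three]
    simp only [Matrix.cons_val_zero, Matrix.cons_val_one, Matrix.head_cons,
      Matrix.cons_val_two, Matrix.tail_cons]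
    rw [← ha0, ← ha1, ← ha2, Units.smul_def, Units.smul_def, Units.smul_def,
      smul_smul, smul_smul, smul_smul, mul_assoc, mul_assoc, mul_assoc,
      inv_mul_cancel₀ (Units.ne_zero a0), inv_mul_cancel₀ (Units.ne_zero a1),
      inv_mul_cancel₀ (Units.ne_zero a2), mul_one, mul_one, mul_one]
    exact hg

lemma lv_ne_zero {i j : Fin 3} (hij : j ≠ i) {v : Fin 3 → K} (hvj : v j ≠ 0) (e : K) :
    v + e • (Pi.single i 1 : Fin 3 → K) ≠ 0 := by
  intro h
  apply hvj
  have := congrFun h j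
  simpa [Pi.single_eq_of_ne hij] using this

lemma mk_line_inj {i j : Fin 3} (hij : j ≠ i) {v : Fin 3 → K} (hvj : v j ≠ 0) {e f : K}
    (h : Projectivization.mk K (v + e • (Pi.single i 1 : Fin 3 → K)) (lv_ne_zero hij hvj e)
      = Projectivization.mk K (v + f • (Pi.single i 1 : Fin 3 → K)) (lv_ne_zero hij hvj f)) :
    e = f := by
  rw [Projectivization.mk_eq_mk_iff] at h
  obtain ⟨a, ha⟩ := h
  have hj := congrFun ha j
  simp only [Units.smul_def, Pi.smul_apply, Pi.add_apply, smul_eq_mul,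
    Pi.single_eq_of_ne hij, mul_zero, add_zero] at hj
  have ha1 : (a : K) = 1 := mul_right_cancel₀ hvj (by rw [hj, one_mul])
  have hi := congrFun ha i
  simp only [Units.smul_def, Pi.smul_apply, Pi.add_apply, smul_eq_mul,
    Pi.single_eq_same, mul_one, ha1, one_mul] at hi
  exact (add_left_cancel hi).symm

lemma keyline (S : Set (ℙ K (Fin 3 → K)))
    (hGP : ∀ u ∈ S, ∀ v ∈ S, ∀ w ∈ S, u ≠ v → u ≠ w → v ≠ w →
      LinearIndependent K ![Projectivization.rep u, Projectivization.rep v,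
        Projectivization.rep w])
    (i j : Fin 3) (hij : j ≠ i) (v : Fin 3 → K) (hvj : v j ≠ 0)
    (c d f : K) (hcd : c ≠ d) (hcf : c ≠ f) (hdf : d ≠ f)
    (hc : Projectivization.mk K (v + c • (Pi.single i 1 : Fin 3 → K))
        (lv_ne_zero hij hvj c) ∈ S)
    (hd : Projectivization.mk K (v + d • (Pi.single i 1 : Fin 3 → K))
        (lv_ne_zero hij hvj d) ∈ S)
    (hf : Projectivization.mk K (v + f • (Pi.single i 1 : Fin 3 → K))
        (lv_ne_zero hij hvj f) ∈ S) : False := by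
  refine key S hGP
    ![v + c • (Pi.single i 1 : Fin 3 → K), v + d • (Pi.single i 1 : Fin 3 → K),
      v + f • (Pi.single i 1 : Fin 3 → K)]
    (fun m => by fin_cases m <;> [exact lv_ne_zero hij hvj c; exact lv_ne_zero hij hvj d;
      exact lv_ne_zero hij hvj f])
    (fun m => by fin_cases m <;> [exact hc; exact hd; exact hf])
    (fun h => hcd (mk_line_inj hij hvj h))
    (fun h => hcf (mk_line_inj hij hvj h))
    (fun h => hdf (mk_line_inj hij hvj h))
    ![d - f, f - c, c - d] ?_ 0 (sub_ne_zero.mpr hdf)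
  show (d - f) • (v + c • _) + (f - c) • (v + d • _) + (c - d) • (v + f • _) = 0
  funext m
  simp only [Pi.add_apply, Pi.smul_apply, smul_eq_mul, Pi.zero_apply]
  ring

lemma single_ne (p : Fin 3) : (Pi.single p 1 : Fin 3 → K) ≠ 0 := fun h =>
  (one_ne_zero : (1:K) ≠ 0) (by simpa using congrFun h p)

lemma single_pair_ne_zero {p q : Fin 3} (hpq : p ≠ q) :
    (Pi.single p 1 + Pi.single q 1 : Fin 3 → K) ≠ 0 := fun h =>
  (one_ne_zero : (1:K) ≠ 0) (by simpa [Pi.single_eq_of_ne hpq] using congrFun h p)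

lemma triple_ne_zero :
    (Pi.single 0 1 + Pi.single 1 1 + Pi.single 2 1 : Fin 3 → K) ≠ 0 := fun h =>
  (one_ne_zero : (1:K) ≠ 0) (by simpa [Pi.single_apply] using congrFun h 0)

lemma pairFalse (S : Set (ℙ K (Fin 3 → K)))
    (hGP : ∀ u ∈ S, ∀ v ∈ S, ∀ w ∈ S, u ≠ v → u ≠ w → v ≠ w →
      LinearIndependent K ![Projectivization.rep u, Projectivization.rep v,
        Projectivization.rep w])
    (hstab : ∀ (M : GL (Fin 3) k) (Q : ℙ K (Fin 3 → K)), Q ∈ S → glAct M Q ∈ S)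
    (char2 : (1 + 1 : K) = 0) (p q : Fin 3) (hpq : p ≠ q)
    (hmem : Projectivization.mk K (Pi.single p 1 + Pi.single q 1 : Fin 3 → K)
      (single_pair_ne_zero hpq) ∈ S) : False := by
  have hqp : q ≠ p := hpq.symm
  have hBeq := glAct_mk (k := k) (K := K) 1 p q hqp
    ((Pi.single p 1 + Pi.single q 1 : Fin 3 → K)) (single_pair_ne_zero hpq)
    ((Pi.single q 1 : Fin 3 → K)) (single_ne q) ?hBvec
  have hCeq := glAct_mk (k := k) (K := K) 1 q p hpq
    ((Pi.single p 1 + Pi.single q 1 : Fin 3 → K)) (single_pair_ne_zero hpq)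
    ((Pi.single p 1 : Fin 3 → K)) (single_ne p) ?hCvec
  case hBvec =>
    funext m
    simp only [Pi.add_apply, Pi.smul_apply, smul_eq_mul, map_one, one_mul, Pi.single_apply]
    by_cases hmp : m = p <;> by_cases hmq : m = q <;>
      simp [hmp, hmq, hpq, hqp] <;> simp_all <;> linear_combination char2
  case hCvec =>
    funext m
    simp only [Pi.add_apply, Pi.smul_apply, smul_eq_mul, map_one, one_mul, Pi.single_apply]
    by_cases hmp : m = p <;> by_cases hmq : m = q <;>
      simp [hmp, hmq, hpq, hqp] <;> simp_all <;> linear_combination char2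
  have hB : Projectivization.mk K (Pi.single q 1 : Fin 3 → K) (single_ne q) ∈ S :=
    hBeq ▸ hstab _ _ hmem
  have hC : Projectivization.mk K (Pi.single p 1 : Fin 3 → K) (single_ne p) ∈ S :=
    hCeq ▸ hstab _ _ hmem
  refine key S hGP
    ![(Pi.single p 1 + Pi.single q 1 : Fin 3 → K), (Pi.single q 1 : Fin 3 → K),
      (Pi.single p 1 : Fin 3 → K)]
    (fun m => by fin_cases m <;> [exact single_pair_ne_zero hpq; exact single_ne q;
      exact single_ne p])
    (fun m => by fin_cases m <;> [exact hmem; exact hB; exact hC]) ?_ ?_ ?_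
    ![1, 1, 1] ?_ 0 one_ne_zero
  · intro h
    rw [Projectivization.mk_eq_mk_iff] at h
    obtain ⟨a, ha⟩ := h
    have := congrFun ha p
    simp [Pi.single_eq_same, Pi.single_eq_of_ne hpq, Units.smul_def] at this
  · intro h
    rw [Projectivization.mk_eq_mk_iff] at h
    obtain ⟨a, ha⟩ := h
    have := congrFun ha q
    simp [Pi.single_eq_same, Pi.single_eq_of_ne hqp, Units.smul_def] at this
  · intro h
    rw [Projectivization.mk_eq_mk_iff] at h
    obtain ⟨a, ha⟩ := h
    have := congrFun ha q
    simp [Pi.single_eq_same, Pi.single_eq_of_ne hqp, Units.smul_def] at this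
  · show (1:K) • (Pi.single p 1 + Pi.single q 1 : Fin 3 → K)
      + (1:K) • (Pi.single q 1 : Fin 3 → K) + (1:K) • (Pi.single p 1 : Fin 3 → K) = 0
    funext m
    simp only [Pi.add_apply, Pi.smul_apply, smul_eq_mul, one_mul, Pi.zero_apply,
      Pi.single_apply]
    by_cases hmp : m = p <;> by_cases hmq : m = q <;>
      simp [hmp, hmq, hpq, hqp] <;> simp_all <;> linear_combination char2

lemma endgame_single (S : Set (ℙ K (Fin 3 → K)))
    (hGP : ∀ u ∈ S, ∀ v ∈ S, ∀ w ∈ S, u ≠ v → u ≠ w → v ≠ w →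
      LinearIndependent K ![Projectivization.rep u, Projectivization.rep v,
        Projectivization.rep w])
    (hstab : ∀ (M : GL (Fin 3) k) (Q : ℙ K (Fin 3 → K)), Q ∈ S → glAct M Q ∈ S)
    (char2 : (1 + 1 : K) = 0) (p q : Fin 3) (hpq : p ≠ q)
    (hmem : Projectivization.mk K (Pi.single p 1 : Fin 3 → K) (single_ne p) ∈ S) :
    False := by
  have hBeq := glAct_mk (k := k) (K := K) 1 q p hpq
    ((Pi.single p 1 : Fin 3 → K)) (single_ne p)
    ((Pi.single p 1 + Pi.single q 1 : Fin 3 → K)) (single_pair_ne_zero hpq) ?hvec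
  case hvec =>
    funext m
    simp only [Pi.add_apply, Pi.smul_apply, smul_eq_mul, map_one, one_mul,
      Pi.single_eq_same, mul_one]
  exact pairFalse S hGP hstab char2 p q hpq (hBeq ▸ hstab _ _ hmem)

lemma endgame_triple (S : Set (ℙ K (Fin 3 → K)))
    (hGP : ∀ u ∈ S, ∀ v ∈ S, ∀ w ∈ S, u ≠ v → u ≠ w → v ≠ w →
      LinearIndependent K ![Projectivization.rep u, Projectivization.rep v,
        Projectivization.rep w])
    (hstab : ∀ (M : GL (Fin 3) k) (Q : ℙ K (Fin 3 → K)), Q ∈ S → glAct M Q ∈ S)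
    (char2 : (1 + 1 : K) = 0)
    (hmem : Projectivization.mk K
      (Pi.single 0 1 + Pi.single 1 1 + Pi.single 2 1 : Fin 3 → K) triple_ne_zero ∈ S) :
    False := by
  have hBeq := glAct_mk (k := k) (K := K) 1 0 1 (by decide)
    ((Pi.single 0 1 + Pi.single 1 1 + Pi.single 2 1 : Fin 3 → K)) triple_ne_zero
    ((Pi.single 1 1 + Pi.single 2 1 : Fin 3 → K)) (single_pair_ne_zero (by decide)) ?hvec
  case hvec =>
    funext m
    fin_cases m <;>
      simp [Pi.single_apply] <;>
      first
        | linear_combination char2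
        | linear_combination (-1 : K) * char2
        | linear_combination (2 : K) * char2
        | linear_combination (-2 : K) * char2
        | linear_combination (3 : K) * char2
        | linear_combination (-3 : K) * char2
  exact pairFalse S hGP hstab char2 1 2 (by decide) (hBeq ▸ hstab _ _ hmem)


variable [PerfectField k] [IsAlgClosure k K]

/-- Lemma 6.2(1).
`Aut_k(ℙ²) = PGL₃(k)` has no orbit in `ℙ²` with between `1` and `8` geometric components in
general position: there is no nonempty subset `S ⊆ ℙ²(K)` with at most `8` elements, no three
of whose points are collinear, stable under both the Galois action and the `PGL₃(k)`-action. -/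
theorem stmt9 :
    ¬ ∃ S : Set (ℙ K (Fin 3 → K)), S.Nonempty ∧ S.Finite ∧ S.ncard ≤ 8 ∧
      (∀ u ∈ S, ∀ v ∈ S, ∀ w ∈ S, u ≠ v → u ≠ w → v ≠ w →
        LinearIndependent K ![Projectivization.rep u, Projectivization.rep v,
          Projectivization.rep w]) ∧
      (∀ g : K ≃ₐ[k] K, galAct g '' S = S) ∧
      (∀ M : GL (Fin 3) k, glAct M '' S = S) := by
  rintro ⟨S, ⟨P, hP⟩, -, -, hGP, -, hGL⟩
  have hstab : ∀ (M : GL (Fin 3) k) (Q : ℙ K (Fin 3 → K)), Q ∈ S → glAct M Q ∈ S :=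
    fun M Q hQ => (hGL M) ▸ Set.mem_image_of_mem _ hQ
  set v : Fin 3 → K := P.rep with hv
  have hPmk : Projectivization.mk K v P.rep_nonzero = P := Projectivization.mk_rep P
  have hline : ∀ (t : k) (i j : Fin 3) (hij : j ≠ i) (hvj : v j ≠ 0),
      Projectivization.mk K (v + (algebraMap k K t * v j) • (Pi.single i 1 : Fin 3 → K))
        (lv_ne_zero hij hvj _) ∈ S := by
    intro t i j hij hvj
    have h := glAct_mk t i j hij v P.rep_nonzero _ (lv_ne_zero hij hvj _) rfl
    rw [hPmk] at h
    exact h ▸ hstab _ _ hP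
  have hline0 : ∀ (i j : Fin 3) (hij : j ≠ i) (hvj : v j ≠ 0),
      Projectivization.mk K (v + (0:K) • (Pi.single i 1 : Fin 3 → K))
        (lv_ne_zero hij hvj 0) ∈ S := by
    intro i j hij hvj
    have heq : Projectivization.mk K (v + (0:K) • (Pi.single i 1 : Fin 3 → K))
        (lv_ne_zero hij hvj 0) = Projectivization.mk K v P.rep_nonzero := by
      rw [Projectivization.mk_eq_mk_iff]
      exact ⟨1, by simp⟩
    rw [heq, hPmk]
    exact hP
  by_cases hk : ∃ a : k, a ≠ 0 ∧ a ≠ 1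
  · obtain ⟨a, ha0, ha1⟩ := hk
    have ha0' : algebraMap k K a ≠ 0 :=
      fun h => ha0 ((algebraMap k K).injective (by rw [h, map_zero]))
    have ha1' : algebraMap k K a ≠ 1 :=
      fun h => ha1 ((algebraMap k K).injective (by rw [h, map_one]))
    have main : ∀ (i j : Fin 3), j ≠ i → v j = 0 := by
      intro i j hij
      by_contra hvj
      refine keyline S hGP i j hij v hvj 0 (algebraMap k K 1 * v j)
        (algebraMap k K a * v j) ?_ ?_ ?_
        (hline0 i j hij hvj) (hline 1 i j hij hvj) (hline a i j hij hvj)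
      · exact (mul_ne_zero (by simp) hvj).symm
      · exact (mul_ne_zero ha0' hvj).symm
      · exact fun h => ha1' (by rw [← mul_right_cancel₀ hvj h, map_one])
    apply P.rep_nonzero
    funext m
    fin_cases m
    · exact main 1 0 (by decide)
    · exact main 0 1 (by decide)
    · exact main 0 2 (by decide)
  · push_neg at hk
    have hk' : ∀ a : k, a = 0 ∨ a = 1 := fun a => or_iff_not_imp_left.mpr (hk a)
    have char2k : (1 + 1 : k) = 0 := by
      rcases hk' (1 + 1) with h | h
      · exact h
      · exact absurd (add_left_cancel (h.trans (add_zero 1).symm)) one_ne_zero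
    have char2 : (1 + 1 : K) = 0 := by
      have h := congrArg (algebraMap k K) char2k
      simpa using h
    have cons : ∀ i j₁ j₂ : Fin 3, j₁ ≠ i → j₂ ≠ i → j₁ ≠ j₂ →
        v j₁ ≠ 0 → v j₂ ≠ 0 → v j₁ = v j₂ := by
      intro i j₁ j₂ h1 h2 h12 hj1 hj2
      by_contra hne
      refine keyline S hGP i j₁ h1 v hj1 0 (algebraMap k K 1 * v j₁)
        (algebraMap k K 1 * v j₂) ?_ ?_ ?_
        (hline0 i j₁ h1 hj1) (hline 1 i j₁ h1 hj1) (hline 1 i j₂ h2 hj2)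
      · exact fun h => hj1 (by simpa using h.symm)
      · exact fun h => hj2 (by simpa using h.symm)
      · exact fun h => hne (by simpa using h)
    -- helper to convert P into a mk of a standard vector
    have hPS : ∀ (w : Fin 3 → K) (hw : w ≠ 0), (∃ c : Kˣ, (c:K) • w = v) →
        Projectivization.mk K w hw ∈ S := by
      intro w hw ⟨c, hc⟩
      have : Projectivization.mk K v P.rep_nonzero = Projectivization.mk K w hw := by
        rw [Projectivization.mk_eq_mk_iff]
        exact ⟨c, hc⟩
      rw [← this, hPmk]
      exact hP
    by_cases h0 : v 0 = 0 <;> by_cases h1 : v 1 = 0 <;> by_cases h2 : v 2 = 0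
    · exact P.rep_nonzero (funext fun m => by fin_cases m <;> assumption)
    · -- only v 2 ≠ 0
      refine endgame_single S hGP hstab char2 2 0 (by decide)
        (hPS _ (single_ne 2) ⟨Units.mk0 (v 2) h2, ?_⟩)
      funext m; fin_cases m <;> simp [Pi.single_apply, h0, h1]
    · -- only v 1 ≠ 0
      refine endgame_single S hGP hstab char2 1 0 (by decide)
        (hPS _ (single_ne 1) ⟨Units.mk0 (v 1) h1, ?_⟩)
      funext m; fin_cases m <;> simp [Pi.single_apply, h0, h2]
    · -- v 1, v 2 ≠ 0
      have he : v 1 = v 2 := cons 0 1 2 (by decide) (by decide) (by decide) h1 h2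
      refine pairFalse S hGP hstab char2 1 2 (by decide)
        (hPS _ (single_pair_ne_zero (by decide)) ⟨Units.mk0 (v 1) h1, ?_⟩)
      funext m; fin_cases m <;> simp [Pi.single_apply, h0, he]
    · -- only v 0 ≠ 0
      refine endgame_single S hGP hstab char2 0 1 (by decide)
        (hPS _ (single_ne 0) ⟨Units.mk0 (v 0) h0, ?_⟩)
      funext m; fin_cases m <;> simp [Pi.single_apply, h1, h2]
    · -- v 0, v 2 ≠ 0
      have he : v 0 = v 2 := cons 1 0 2 (by decide) (by decide) (by decide) h0 h2
      refine pairFalse S hGP hstab char2 0 2 (by decide)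
        (hPS _ (single_pair_ne_zero (by decide)) ⟨Units.mk0 (v 0) h0, ?_⟩)
      funext m; fin_cases m <;> simp [Pi.single_apply, h1, he]
    · -- v 0, v 1 ≠ 0
      have he : v 0 = v 1 := cons 2 0 1 (by decide) (by decide) (by decide) h0 h1
      refine pairFalse S hGP hstab char2 0 1 (by decide)
        (hPS _ (single_pair_ne_zero (by decide)) ⟨Units.mk0 (v 0) h0, ?_⟩)
      funext m; fin_cases m <;> simp [Pi.single_apply, h2, he]
    · -- all nonzero
      have he1 : v 0 = v 1 := cons 2 0 1 (by decide) (by decide) (by decide) h0 h1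
      have he2 : v 0 = v 2 := cons 1 0 2 (by decide) (by decide) (by decide) h0 h2
      refine endgame_triple S hGP hstab char2
        (hPS _ triple_ne_zero ⟨Units.mk0 (v 0) h0, ?_⟩)
      funext m; fin_cases m <;> simp [Pi.single_apply, he1.symm, he2.symm]


end CremonaPaper
end

section
/- Let k be a perfect field with algebraic closure k̄, and let G be the group of bijections of ℙ¹(k̄) × ℙ¹(k̄) generated by PGL₂(k) × PGL₂(k), acting componentwise, together with the swap (x,y) ↦ (y,x). There is no nonempty subset S ⊆ ℙ¹(k̄) × ℙ¹(k̄) with at most 7 elements, whose points have pairwise distinct first coordinates and pairwise distinct second coordinates, that is stable under both G and the coordinatewise Gal(k̄/k)-action h·(x,y) = (x^h, y^h). -/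
open scoped LinearAlgebra.Projectivization

namespace CremonaPaper

variable {k K : Type} [Field k] [Field K] [Algebra k K]

private def matE : GL (Fin 2) k :=
  ⟨!![1,1;0,1], !![1,-1;0,1],
   by ext i j; fin_cases i <;> fin_cases j <;> simp [Matrix.mul_apply, Fin.sum_univ_two],
   by ext i j; fin_cases i <;> fin_cases j <;> simp [Matrix.mul_apply, Fin.sum_univ_two]⟩

private def matF : GL (Fin 2) k :=
  ⟨!![1,0;1,1], !![1,0;-1,1],
   by ext i j; fin_cases i <;> fin_cases j <;> simp [Matrix.mul_apply, Fin.sum_univ_two],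
   by ext i j; fin_cases i <;> fin_cases j <;> simp [Matrix.mul_apply, Fin.sum_univ_two]⟩

private lemma fix_aux (A : Matrix (Fin 2) (Fin 2) K) (hA : IsUnit A) (x : ℙ K (Fin 2 → K))
    (h : mulAct A hA x = x) : ∃ a : Kˣ, ∀ i, (a : K) * x.rep i = A.mulVec x.rep i := by
  unfold mulAct at h
  conv_rhs at h => rw [← x.mk_rep]
  rw [Projectivization.mk_eq_mk_iff] at h
  obtain ⟨a, ha⟩ := h
  exact ⟨a, fun i => congrFun ha i⟩

private lemma glActE_fix (x : ℙ K (Fin 2 → K)) (h : glAct (matE (k := k)) x = x) :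
    x.rep 1 = 0 := by
  obtain ⟨a, ha⟩ := fix_aux _ _ x h
  have h0 := ha 0
  have h1 := ha 1
  simp [matE, Matrix.mulVec, dotProduct, Fin.sum_univ_two, Matrix.map_apply] at h0 h1
  by_contra hne
  have hfac : ((a : K) - 1) * x.rep 1 = 0 := by rw [sub_mul, h1, one_mul, sub_self]
  rcases mul_eq_zero.mp hfac with hh | hh
  · rw [sub_eq_zero] at hh
    rw [hh, one_mul] at h0
    exact hne (left_eq_add.mp h0)
  · exact hne hh

private lemma glActF_fix (x : ℙ K (Fin 2 → K)) (h : glAct (matF (k := k)) x = x) :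
    x.rep 0 = 0 := by
  obtain ⟨a, ha⟩ := fix_aux _ _ x h
  have h0 := ha 0
  have h1 := ha 1
  simp [matF, Matrix.mulVec, dotProduct, Fin.sum_univ_two, Matrix.map_apply] at h0 h1
  by_contra hne
  have hfac : ((a : K) - 1) * x.rep 0 = 0 := by rw [sub_mul, h0, one_mul, sub_self]
  rcases mul_eq_zero.mp hfac with hh | hh
  · rw [sub_eq_zero] at hh
    rw [hh, one_mul] at h1
    exact hne (right_eq_add.mp h1)
  · exact hne hh

private lemma glAct_one (Q : ℙ K (Fin 2 → K)) : glAct (1 : GL (Fin 2) k) Q = Q := by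
  unfold glAct mulAct
  conv_rhs => rw [← Q.mk_rep]
  rw [Projectivization.mk_eq_mk_iff]
  refine ⟨1, ?_⟩
  simp [Matrix.map_one, Matrix.one_mulVec]

variable [PerfectField k] [IsAlgClosure k K]

/-- Lemma 6.2(2), case of `𝔽₀ = ℙ¹ × ℙ¹`.
Let `G` be the group of bijections of `ℙ¹(K) × ℙ¹(K)` generated by `PGL₂(k) × PGL₂(k)`
acting componentwise together with the swap of the two factors.  There is no nonempty subset
`S` with at most `7` elements, whose points have pairwise distinct first coordinates and
pairwise distinct second coordinates (i.e. whose geometric components lie on pairwise distinct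
rulings of `𝔽₀`), that is stable under both `G` and the coordinatewise Galois action.
(Stability under `G` is expressed by stability under its generators.) -/
theorem stmt10 :
    ¬ ∃ S : Set (ℙ K (Fin 2 → K) × ℙ K (Fin 2 → K)), S.Nonempty ∧ S.Finite ∧ S.ncard ≤ 7 ∧
      (∀ P ∈ S, ∀ Q ∈ S, P ≠ Q → P.1 ≠ Q.1 ∧ P.2 ≠ Q.2) ∧
      (∀ M N : GL (Fin 2) k,
        (fun P : ℙ K (Fin 2 → K) × ℙ K (Fin 2 → K) => (glAct M P.1, glAct N P.2)) '' S = S) ∧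
      (Prod.swap '' S = S) ∧
      (∀ g : K ≃ₐ[k] K,
        (fun P : ℙ K (Fin 2 → K) × ℙ K (Fin 2 → K) => (galAct g P.1, galAct g P.2)) '' S = S) := by
  rintro ⟨S, ⟨P, hP⟩, -, -, hdist, hGL, -, -⟩
  have hmem : ∀ M : GL (Fin 2) k, glAct M P.1 = P.1 := by
    intro M
    have hE : (glAct M P.1, glAct (1 : GL (Fin 2) k) P.2) ∈ S := by
      rw [← hGL M 1]; exact ⟨P, hP, rfl⟩
    rw [glAct_one] at hE
    have hQP : (glAct M P.1, P.2) = P := by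
      by_contra hne
      exact (hdist _ hE P hP hne).2 rfl
    exact congrArg Prod.fst hQP
  have h1 := glActE_fix P.1 (hmem matE)
  have h0 := glActF_fix P.1 (hmem matF)
  exact P.1.rep_nonzero (funext fun i => by fin_cases i <;> assumption)

end CremonaPaper
end

section
/- Let k be a field, let r ≥ 1 and n ≥ 2 be integers, and let P₁,…,P_r ∈ k[z] be nonzero polynomials with P_i(0) ≠ 0 for all i and deg P₁ + ⋯ + deg P_r = 2n. Set P = P₁⋯P_r, d₀ = 0 and d_i = deg P₁ + ⋯ + deg P_i for i = 1,…,r. Define partial self-maps of k²: φ_i(y,z) = (y/P_i(z), z) if d_i ≤ n; φ_i(y,z) = (P_i(z)/y, z) if d_{i−1} ≤ n < d_i; φ_i(y,z) = (P_i(z)·y, z) if d_{i−1} > n. Then for every (y,z) ∈ k² such that y ≠ 0 and P_i(z) ≠ 0 for all i (so that all maps in the composition are defined with nonzero denominators), one has (φ_r ∘ ⋯ ∘ φ₁)(y,z) = (P(z)/y, z). -/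
namespace CremonaPaper

variable {k : Type} [Field k]

/-- The elementary Sarkisov links of type II between Hirzebruch surfaces, in affine
coordinates (`phi n P i` is the map `φ_{i+1}` of the paper, indexed from `0`). -/
noncomputable def phi (n : ℕ) (P : ℕ → Polynomial k) (i : ℕ) : k × k → k × k :=
  fun yz =>
    if (∑ j ∈ Finset.range (i + 1), (P j).natDegree) ≤ n then
      (yz.1 / (P i).eval yz.2, yz.2)
    else if (∑ j ∈ Finset.range i, (P j).natDegree) ≤ n then
      ((P i).eval yz.2 / yz.1, yz.2)
    else ((P i).eval yz.2 * yz.1, yz.2)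

/-- `compUpTo f m = f (m-1) ∘ ⋯ ∘ f 1 ∘ f 0`. -/
noncomputable def compUpTo {α : Type} (f : ℕ → α → α) : ℕ → α → α
  | 0 => id
  | m + 1 => f m ∘ compUpTo f m

/-- Lemma 8.6 / Example 5.4.
Let `P₁,…,P_r` be nonzero polynomials with `Pᵢ(0) ≠ 0` and total degree `2n`, `n ≥ 2`, and
let `φ₁,…,φ_r` be the associated elementary links.  Then, wherever all denominators are
nonzero, `(φ_r ∘ ⋯ ∘ φ₁)(y,z) = (P(z)/y, z)` with `P = P₁⋯P_r`, i.e. the composition is the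
fibration-preserving involution of `𝔽_n` of Example 5.4. -/
theorem stmt12 (r n : ℕ) (hr : 1 ≤ r) (hn : 2 ≤ n) (P : ℕ → Polynomial k)
    (hP : ∀ i < r, P i ≠ 0) (hP0 : ∀ i < r, (P i).eval 0 ≠ 0)
    (hdeg : ∑ i ∈ Finset.range r, (P i).natDegree = 2 * n)
    (y z : k) (hy : y ≠ 0) (hz : ∀ i < r, (P i).eval z ≠ 0) :
    compUpTo (phi n P) r (y, z) = ((∏ i ∈ Finset.range r, P i).eval z / y, z) := by
  have key : ∀ m, m ≤ r → compUpTo (phi n P) m (y, z) =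
      if (∑ j ∈ Finset.range m, (P j).natDegree) ≤ n then
        (y / (∏ j ∈ Finset.range m, P j).eval z, z)
      else ((∏ j ∈ Finset.range m, P j).eval z / y, z) := by
    intro m
    induction m with
    | zero => simp [compUpTo]
    | succ m ih =>
      intro hm
      have hQ : (∏ j ∈ Finset.range m, P j).eval z ≠ 0 := by
        rw [Polynomial.eval_prod]
        exact Finset.prod_ne_zero_iff.mpr
          (fun j hj => hz j (by have := Finset.mem_range.mp hj; omega))
      have hPm : (P m).eval z ≠ 0 := hz m (by omega)
      have hsum : ∑ j ∈ Finset.range (m + 1), (P j).natDegree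
          = (∑ j ∈ Finset.range m, (P j).natDegree) + (P m).natDegree :=
        Finset.sum_range_succ _ _
      have hprod : (∏ j ∈ Finset.range (m + 1), P j).eval z
          = (∏ j ∈ Finset.range m, P j).eval z * (P m).eval z := by
        rw [Finset.prod_range_succ, Polynomial.eval_mul]
      rw [compUpTo, Function.comp_apply, ih (by omega)]
      by_cases hA : (∑ j ∈ Finset.range (m + 1), (P j).natDegree) ≤ n
      · have hB : (∑ j ∈ Finset.range m, (P j).natDegree) ≤ n := by omega
        simp only [phi, if_pos hA, if_pos hB, hprod]
        rw [div_div]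
      · by_cases hB : (∑ j ∈ Finset.range m, (P j).natDegree) ≤ n
        · simp only [phi, if_neg hA, if_pos hB, hprod]
          rw [Prod.mk.injEq]
          refine ⟨?_, rfl⟩
          field_simp
        · simp only [phi, if_neg hA, if_neg hB, hprod]
          rw [Prod.mk.injEq]
          refine ⟨?_, rfl⟩
          field_simp
  have := key r le_rfl
  rw [this, if_neg (by omega)]
end CremonaPaper
end

section
/- Let K be a field, let r ≥ 1 be an integer, and for i = 1,…,r let t_{i,1}, t_{i,2} ∈ K[w] be nonzero polynomials; set P₁ = t_{1,1}⋯t_{r,1} and P₂ = t_{1,2}⋯t_{r,2}. Define partial self-maps of K²: ψ_i(u,v) = (u·t_{i,2}(uv)/t_{i,1}(uv), v·t_{i,1}(uv)/t_{i,2}(uv)) for i = 1,…,r, α(u,v) = (v,u), and ψ(u,v) = (v·P₁(uv)/P₂(uv), u·P₂(uv)/P₁(uv)). Then each ψ_i preserves the product of the two coordinates (the first coordinate times the second coordinate of ψ_i(u,v) equals uv), and for every (u,v) ∈ K² such that t_{i,1}(uv) ≠ 0 and t_{i,2}(uv) ≠ 0 for all i, one has (α ∘ ψ_r ∘ ⋯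 ∘ ψ₁)(u,v) = ψ(u,v). -/
namespace CremonaPaper

variable {K : Type} [Field K]

/-- The Sarkisov links of type II over `ℙ¹`, in affine coordinates on a standard chart of
`ℙ¹ × ℙ¹` (`psi t1 t2 i` is the map `ψ_{i+1}` of the paper, indexed from `0`). -/
noncomputable def psi (t1 t2 : ℕ → Polynomial K) (i : ℕ) : K × K → K × K :=
  fun uv =>
    (uv.1 * (t2 i).eval (uv.1 * uv.2) / (t1 i).eval (uv.1 * uv.2),
     uv.2 * (t1 i).eval (uv.1 * uv.2) / (t2 i).eval (uv.1 * uv.2))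

/-- Lemma 8.9 / Example 5.10.
With `P₁ = t_{1,1}⋯t_{r,1}` and `P₂ = t_{1,2}⋯t_{r,2}`, each link `ψᵢ` preserves the product
of the two coordinates, and wherever all denominators are nonzero the composition
`α ∘ ψ_r ∘ ⋯ ∘ ψ₁` (with `α` the swap) equals the involution
`ψ(u,v) = (v·P₁(uv)/P₂(uv), u·P₂(uv)/P₁(uv))`. -/
theorem stmt13 (r : ℕ) (hr : 1 ≤ r) (t1 t2 : ℕ → Polynomial K)
    (h1 : ∀ i < r, t1 i ≠ 0) (h2 : ∀ i < r, t2 i ≠ 0) :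
    (∀ i < r, ∀ u v : K, (t1 i).eval (u * v) ≠ 0 → (t2 i).eval (u * v) ≠ 0 →
      (psi t1 t2 i (u, v)).1 * (psi t1 t2 i (u, v)).2 = u * v) ∧
    (∀ u v : K, (∀ i < r, (t1 i).eval (u * v) ≠ 0 ∧ (t2 i).eval (u * v) ≠ 0) →
      Prod.swap (compUpTo (psi t1 t2) r (u, v)) =
        (v * (∏ i ∈ Finset.range r, t1 i).eval (u * v) /
            (∏ i ∈ Finset.range r, t2 i).eval (u * v),
         u * (∏ i ∈ Finset.range r, t2 i).eval (u * v) /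
            (∏ i ∈ Finset.range r, t1 i).eval (u * v))) := by
  constructor
  · intro i hi u v hu hv
    simp only [psi]
    field_simp
  · intro u v h
    set e1 : ℕ → K := fun i => (t1 i).eval (u * v) with he1
    set e2 : ℕ → K := fun i => (t2 i).eval (u * v) with he2
    have key : ∀ m ≤ r, compUpTo (psi t1 t2) m (u, v) =
        (u * (∏ i ∈ Finset.range m, e2 i) / (∏ i ∈ Finset.range m, e1 i),
         v * (∏ i ∈ Finset.range m, e1 i) / (∏ i ∈ Finset.range m, e2 i)) := by
      intro m
      induction m with
      | zero => simp [compUpTo]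
      | succ m ih =>
        intro hm
        have hm' : m < r := hm
        have ihe := ih (le_of_lt hm')
        have hA : (∏ i ∈ Finset.range m, e1 i) ≠ 0 :=
          Finset.prod_ne_zero_iff.mpr fun i hi =>
            (h i (lt_of_lt_of_le (Finset.mem_range.mp hi) (le_of_lt hm'))).1
        have hB : (∏ i ∈ Finset.range m, e2 i) ≠ 0 :=
          Finset.prod_ne_zero_iff.mpr fun i hi =>
            (h i (lt_of_lt_of_le (Finset.mem_range.mp hi) (le_of_lt hm'))).2
        have h1m := (h m hm').1
        have h2m := (h m hm').2
        have hprod : (u * (∏ i ∈ Finset.range m, e2 i) / (∏ i ∈ Finset.range m, e1 i)) *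
            (v * (∏ i ∈ Finset.range m, e1 i) / (∏ i ∈ Finset.range m, e2 i)) = u * v := by
          field_simp
        show psi t1 t2 m (compUpTo (psi t1 t2) m (u, v)) = _
        rw [ihe]
        simp only [psi, hprod, Finset.prod_range_succ]
        rw [Prod.mk.injEq]
        constructor
        · rw [← he1, ← he2]
          simp only [he1, he2, mul_comm v u]
          field_simp
        · rw [← he1, ← he2]
          simp only [he1, he2, mul_comm v u]
          field_simp
    rw [key r le_rfl, Prod.swap_prod_mk, Polynomial.eval_prod, Polynomial.eval_prod]

end CremonaPaper
end
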